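/- arXiv:1606.05172 — 4 statements merged into one kernel-verified Lean document; each statement's English description precedes it below -/
import Mathlib

section
/- If G(f) has no negative loops for f : {0,1}^n → {0,1}^n, then there exists a monotone Boolean network f' : {0,1}^{2n} → {0,1}^{2n} such that: (i) x is a fixed point of f iff (x, x̄) is a fixed point of f', and (ii) for all x, y ∈ {0,1}^n, Γ(f) has a path from x to y of length ℓ iff Γ(f') has a path from (x, x̄) to (y, ȳ) of length 2ℓ. -/
/-- One asynchronous update step of the Boolean network `f`. -/
def Step {I : Type*} [DecidableEq I] (f : (I → Bool) → I → Bool) (x y : I → Bool) : Prop :=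
  ∃ i, f x i ≠ x i ∧ y = Function.update x i (f x i)

/-- `Γ(f)` has a path from `x` to `y` of length `l`. -/
def PathLen {I : Type*} [DecidableEq I] (f : (I → Bool) → I → Bool)
    (x y : I → Bool) (l : ℕ) : Prop :=
  ∃ p : ℕ → I → Bool, p 0 = x ∧ p l = y ∧ ∀ k < l, Step f (p k) (p (k + 1))

/-- Positive arc from `j` to `i` in the interaction graph `G(f)`. -/
def PosArc {n : ℕ} (f : (Fin n → Bool) → Fin n → Bool) (j i : Fin n) : Prop :=
  ∃ x, f (Function.update x j true) i = true ∧ f (Function.update x j false) i = false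

/-- Negative arc from `j` to `i` in the interaction graph `G(f)`. -/
def NegArc {n : ℕ} (f : (Fin n → Bool) → Fin n → Bool) (j i : Fin n) : Prop :=
  ∃ x, f (Function.update x j true) i = false ∧ f (Function.update x j false) i = true

/-- Arc in the underlying unsigned digraph of `G(f)`. -/
def Arc {n : ℕ} (f : (Fin n → Bool) → Fin n → Bool) (j i : Fin n) : Prop :=
  PosArc f j i ∨ NegArc f j i

/-- The interaction graph `G(f)` is acyclic (no directed cycle, including loops). -/
def AcyclicIG {n : ℕ} (f : (Fin n → Bool) → Fin n → Bool) : Prop :=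
  ∀ i, ¬ Relation.TransGen (Arc f) i i

/-- Hamming distance. -/
def ham {n : ℕ} (x y : Fin n → Bool) : ℕ :=
  (Finset.univ.filter fun i => x i ≠ y i).card

/-- Componentwise negation. -/
def negc {n : ℕ} (x : Fin n → Bool) : Fin n → Bool := fun i => !(x i)

/-- Number of ones (weight). -/
def wt {n : ℕ} (x : Fin n → Bool) : ℕ :=
  (Finset.univ.filter fun i => x i = true).card

/-- `x` with coordinate `i` flipped. -/
def flipAt {n : ℕ} (x : Fin n → Bool) (i : Fin n) : Fin n → Bool :=
  Function.update x i (!(x i))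

/-- `G(f)` has no negative loops. -/
def NoNegLoop {n : ℕ} (f : (Fin n → Bool) → Fin n → Bool) : Prop :=
  ∀ i, ¬ NegArc f i i

/-- First-half components of the embedding construction `f'`. -/
def F1 {n : ℕ} (f : (Fin n → Bool) → Fin n → Bool) (x y : Fin n → Bool) (i : Fin n) : Bool :=
  if y = negc x ∨ flipAt y i = negc x then f x i
  else if wt x + wt y = n then !(x i)
  else if wt x + wt y = n + 1 then true
  else if wt x + wt y + 1 = n then false
  else if n + 2 ≤ wt x + wt y then true
  else false

/-- The embedding construction `f' : {0,1}^{2n} → {0,1}^{2n}`, with the `2n`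
coordinates indexed by `Fin n ⊕ Fin n`. -/
def Fext {n : ℕ} (f : (Fin n → Bool) → Fin n → Bool) (z : (Fin n ⊕ Fin n) → Bool) :
    (Fin n ⊕ Fin n) → Bool :=
  Sum.elim (fun i => F1 f (z ∘ Sum.inl) (z ∘ Sum.inr) i)
           (fun i => !(F1 f (negc (z ∘ Sum.inr)) (negc (z ∘ Sum.inl)) i))

/-- Concatenation `(x, y) ∈ {0,1}^{2n}`. -/
def pair {n : ℕ} (x y : Fin n → Bool) : (Fin n ⊕ Fin n) → Bool := Sum.elim x y


namespace S13

variable {n : ℕ}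

lemma bool_ne {a b : Bool} (h : a ≠ b) : a = !b := by
  cases a <;> cases b <;> simp_all

lemma ble {a b : Bool} (h : a = true → b = true) : a ≤ b := by
  cases a
  · exact Bool.false_le b
  · simp [h rfl]

@[simp] lemma negc_negc (x : Fin n → Bool) : negc (negc x) = x := by
  funext i; simp [negc]

@[simp] lemma pair_inl (x y : Fin n → Bool) (i : Fin n) : pair x y (Sum.inl i) = x i := rfl
@[simp] lemma pair_inr (x y : Fin n → Bool) (i : Fin n) : pair x y (Sum.inr i) = y i := rfl

lemma eq_pair (z : (Fin n ⊕ Fin n) → Bool) :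
    z = pair (fun i => z (Sum.inl i)) (fun i => z (Sum.inr i)) := by
  funext c; cases c <;> rfl

lemma update_pair_inl (x y : Fin n → Bool) (i : Fin n) (b : Bool) :
    Function.update (pair x y) (Sum.inl i) b = pair (Function.update x i b) y := by
  funext c
  rcases c with j | j <;> simp [pair, Function.update_apply]

lemma update_pair_inr (x y : Fin n → Bool) (i : Fin n) (b : Bool) :
    Function.update (pair x y) (Sum.inr i) b = pair x (Function.update y i b) := by
  funext c
  rcases c with j | j <;> simp [pair, Function.update_apply]

@[simp] lemma flipAt_flipAt (y : Fin n → Bool) (i : Fin n) : flipAt (flipAt y i) i = y := by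
  funext j
  by_cases h : j = i
  · subst h; simp [flipAt]
  · simp [flipAt, Function.update_of_ne h]

lemma update_self_of {x : Fin n → Bool} {i : Fin n} {b : Bool} (h : x i = b) :
    Function.update x i b = x := by
  rw [← h, Function.update_eq_self]

lemma negc_update (x : Fin n → Bool) (i : Fin n) (b : Bool) :
    negc (Function.update x i b) = Function.update (negc x) i (!b) := by
  funext j
  by_cases hj : j = i
  · subst hj; simp [negc]
  · simp [negc, Function.update_of_ne hj]

lemma flipAt_eq_true {x : Fin n → Bool} {i : Fin n} (h : x i = false) :
    flipAt x i = Function.update x i true := by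
  simp [flipAt, h]

lemma flipAt_eq_false {x : Fin n → Bool} {i : Fin n} (h : x i = true) :
    flipAt x i = Function.update x i false := by
  simp [flipAt, h]

lemma wt_le (x : Fin n → Bool) : wt x ≤ n := by
  have := Finset.card_filter_le (Finset.univ : Finset (Fin n)) (fun i => x i = true)
  simpa [wt] using this

lemma wt_negc (x : Fin n → Bool) : wt x + wt (negc x) = n := by
  classical
  have h := Finset.card_filter_add_card_filter_not
    (s := (Finset.univ : Finset (Fin n))) (p := fun i => x i = true)
  have h2 : (Finset.univ.filter fun i => negc x i = true)
      = Finset.univ.filter (fun i : Fin n => ¬ (x i = true)) := by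
    apply Finset.filter_congr
    intro i _
    simp [negc]
  rw [wt, wt, h2]
  simpa using h

lemma wt_update (x : Fin n → Bool) (i : Fin n) (b : Bool) :
    wt (Function.update x i b) + (if x i = true then 1 else 0)
      = wt x + (if b = true then 1 else 0) := by
  classical
  by_cases hbx : b = x i
  · subst hbx; rw [Function.update_eq_self]
  · cases hx : x i
    · have hb : b = true := by cases b <;> simp_all
      subst hb
      have hmem : i ∉ Finset.univ.filter (fun j => x j = true) := by simp [hx]
      have hset : Finset.univ.filter (fun j => Function.update x i true j = true)
          = insert i (Finset.univ.filter fun j => x j = true) := by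
        ext j
        by_cases hj : j = i
        · subst hj; simp
        · simp [Function.update_of_ne hj, hj]
      rw [wt, wt, hset, Finset.card_insert_of_notMem hmem]
      simp
    · have hb : b = false := by cases b <;> simp_all
      subst hb
      have hmem : i ∉ Finset.univ.filter (fun j => Function.update x i false j = true) := by simp
      have hset : Finset.univ.filter (fun j => x j = true)
          = insert i (Finset.univ.filter fun j => Function.update x i false j = true) := by
        ext j
        by_cases hj : j = i
        · subst hj; simp [hx]
        · simp [Function.update_of_ne hj, hj]
      rw [wt, wt, hset, Finset.card_insert_of_notMem hmem]
      simp

lemma wt_update_true {x : Fin n → Bool} {i : Fin n} (h : x i = false) :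
    wt (Function.update x i true) = wt x + 1 := by
  have := wt_update x i true
  simp [h] at this
  omega

lemma wt_update_false {x : Fin n → Bool} {i : Fin n} (h : x i = true) :
    wt (Function.update x i false) + 1 = wt x := by
  have := wt_update x i false
  simp [h] at this
  omega

lemma wt_update_le (w : Fin n → Bool) (i : Fin n) (b : Bool) :
    wt (Function.update w i b) ≤ wt w + 1 ∧ wt w ≤ wt (Function.update w i b) + 1 := by
  have := wt_update w i b
  split_ifs at this <;> omega

/-- total weight of a doubled state -/
def W (z : (Fin n ⊕ Fin n) → Bool) : ℕ :=
  wt (fun i => z (Sum.inl i)) + wt (fun i => z (Sum.inr i))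

lemma W_pair (x y : Fin n → Bool) : W (pair x y) = wt x + wt y := rfl

/-- the "half-flipped" intermediate state -/
def Mid (u : Fin n → Bool) (i : Fin n) : (Fin n ⊕ Fin n) → Bool :=
  pair u (Function.update (negc u) i (u i))

lemma near_iff {x y : Fin n → Bool} {i : Fin n} :
    flipAt y i = negc x ↔ y = Function.update (negc x) i (x i) := by
  constructor
  · intro h
    have h2 : flipAt (flipAt y i) i = flipAt (negc x) i := by rw [h]
    rw [flipAt_flipAt] at h2
    rw [h2]
    simp [flipAt, negc]
  · intro h
    subst h
    rw [flipAt]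
    rw [Function.update_self, Function.update_idem]
    have : Function.update (negc x) i (!(x i)) = Function.update (negc x) i (negc x i) := rfl
    rw [this, Function.update_eq_self]

lemma dual_cond (x y : Fin n → Bool) (i : Fin n) :
    (negc x = negc (negc y) ∨ flipAt (negc x) i = negc (negc y)) ↔
      (y = negc x ∨ flipAt y i = negc x) := by
  rw [negc_negc]
  constructor
  · rintro (h | h)
    · exact Or.inl h.symm
    · right; rw [← h, flipAt_flipAt]
  · rintro (h | h)
    · exact Or.inl h.symm
    · right; rw [← h, flipAt_flipAt]

lemma F1_cond {f : (Fin n → Bool) → Fin n → Bool} {x y : Fin n → Bool} {i : Fin n}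
    (h : y = negc x ∨ flipAt y i = negc x) : F1 f x y i = f x i := by
  unfold F1; rw [if_pos h]

lemma F1_weight {f : (Fin n → Bool) → Fin n → Bool} {x y : Fin n → Bool} {i : Fin n}
    (h : ¬(y = negc x ∨ flipAt y i = negc x)) :
    F1 f x y i = (if wt x + wt y = n then !(x i) else if wt x + wt y = n + 1 then true
      else if wt x + wt y + 1 = n then false else if n + 2 ≤ wt x + wt y then true
      else false) := by
  unfold F1; rw [if_neg h]

lemma Fext_inl (f : (Fin n → Bool) → Fin n → Bool) (x y : Fin n → Bool) (i : Fin n) :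
    Fext f (pair x y) (Sum.inl i) = F1 f x y i := rfl

lemma Fext_inr (f : (Fin n → Bool) → Fin n → Bool) (x y : Fin n → Bool) (i : Fin n) :
    Fext f (pair x y) (Sum.inr i) = !(F1 f (negc y) (negc x) i) := rfl

lemma wt_of_near {x y : Fin n → Bool} {i : Fin n} (h : flipAt y i = negc x) :
    (x i = true ∧ wt x + wt y = n + 1) ∨ (x i = false ∧ wt x + wt y + 1 = n) := by
  have hy : y = Function.update (negc x) i (x i) := near_iff.mp h
  have hw := wt_update (negc x) i (x i)
  have hn := wt_negc x
  rw [← hy] at hw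
  cases hxi : x i
  · right; refine ⟨rfl, ?_⟩
    rw [hxi] at hw; simp [negc, hxi] at hw; omega
  · left; refine ⟨rfl, ?_⟩
    rw [hxi] at hw; simp [negc, hxi] at hw; omega

lemma wt_of_diag {x y : Fin n → Bool} (h : y = negc x) : wt x + wt y = n := by
  rw [h]; exact wt_negc x

lemma Fext_diag (f : (Fin n → Bool) → Fin n → Bool) (x : Fin n → Bool) :
    Fext f (pair x (negc x)) = pair (f x) (negc (f x)) := by
  funext c
  rcases c with i | i
  · rw [Fext_inl, F1_cond (Or.inl rfl)]; rfl
  · rw [Fext_inr]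
    have h : F1 f (negc (negc x)) (negc x) i = f x i := by
      rw [negc_negc]; exact F1_cond (Or.inl rfl)
    rw [h]; rfl

lemma negc_midY (u : Fin n → Bool) (i : Fin n) :
    negc (Function.update (negc u) i (u i)) = flipAt u i := by
  rw [negc_update]
  funext j
  by_cases hj : j = i
  · subst hj; simp [flipAt, negc]
  · simp [flipAt, negc, Function.update_of_ne hj]

lemma Fext_Mid_inl_self (f : (Fin n → Bool) → Fin n → Bool) (u : Fin n → Bool) (i : Fin n) :
    Fext f (Mid u i) (Sum.inl i) = f u i := by
  rw [Mid, Fext_inl]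
  exact F1_cond (Or.inr (near_iff.mpr rfl))

lemma Fext_Mid_inr_self (f : (Fin n → Bool) → Fin n → Bool) (u : Fin n → Bool) (i : Fin n) :
    Fext f (Mid u i) (Sum.inr i) = !(f (flipAt u i) i) := by
  rw [Mid, Fext_inr, negc_midY]
  congr 1
  apply F1_cond
  right
  rw [show negc (flipAt u i) = Function.update (negc u) i (u i) by
    rw [← negc_midY u i, negc_negc]]
  funext j
  by_cases hj : j = i
  · subst hj; simp [flipAt, negc]
  · simp [flipAt, negc, Function.update_of_ne hj]

lemma midY_ne_negc {u : Fin n → Bool} {i : Fin n} :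
    Function.update (negc u) i (u i) ≠ negc u := by
  intro h
  have := congrFun h i
  rw [Function.update_self] at this
  have : u i = !(u i) := this
  cases hu : u i <;> rw [hu] at this <;> simp at this

lemma mid_not_cond {u : Fin n → Bool} {i j : Fin n} (hj : j ≠ i) :
    ¬(Function.update (negc u) i (u i) = negc u ∨
      flipAt (Function.update (negc u) i (u i)) j = negc u) := by
  rintro (h | h)
  · exact midY_ne_negc h
  · have := congrFun h i
    rw [flipAt, Function.update_of_ne (Ne.symm hj), Function.update_self] at this
    cases hu : u i <;> simp [negc, hu] at this

lemma wt_midY (u : Fin n → Bool) (i : Fin n) :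
    (u i = true ∧ wt u + wt (Function.update (negc u) i (u i)) = n + 1) ∨
    (u i = false ∧ wt u + wt (Function.update (negc u) i (u i)) + 1 = n) := by
  have h : flipAt (Function.update (negc u) i (u i)) i = negc u := near_iff.mpr rfl
  exact wt_of_near h

lemma Fext_Mid_inl_other (f : (Fin n → Bool) → Fin n → Bool) (u : Fin n → Bool)
    {i j : Fin n} (hj : j ≠ i) : Fext f (Mid u i) (Sum.inl j) = u i := by
  rw [Mid, Fext_inl, F1_weight (mid_not_cond hj)]
  rcases wt_midY u i with ⟨hu, hw⟩ | ⟨hu, hw⟩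
  · rw [if_neg (by omega), if_pos hw, hu]
  · rw [if_neg (by omega), if_neg (by omega), if_pos hw, hu]

lemma Fext_Mid_inr_other (f : (Fin n → Bool) → Fin n → Bool) (u : Fin n → Bool)
    {i j : Fin n} (hj : j ≠ i) : Fext f (Mid u i) (Sum.inr j) = u i := by
  rw [Mid, Fext_inr, negc_midY]
  have hcond : ¬(negc u = negc (flipAt u i) ∨ flipAt (negc u) j = negc (flipAt u i)) := by
    have hrw : negc (flipAt u i) = Function.update (negc u) i (u i) := by
      rw [← negc_midY u i, negc_negc]
    rw [hrw]
    rintro (h | h)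
    · exact midY_ne_negc h.symm
    · have := congrFun h i
      rw [flipAt, Function.update_of_ne (Ne.symm hj), Function.update_self] at this
      cases hu : u i <;> simp [negc, hu] at this
  rw [F1_weight hcond]
  have h1 := wt_negc u
  have h2 := wt_update u i (!(u i))
  rcases hu : u i
  · -- wt (flipAt u i) = wt u + 1, total = n + 1, F1 = true, result false
    rw [hu] at h2; simp at h2
    have h3 : wt (negc u) + wt u = n := by omega
    have h4 : wt (flipAt u i) = wt u + 1 := by
      rw [flipAt, hu]; simpa using h2
    have h5 : wt (flipAt u i) + wt (negc u) = n + 1 := by omega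
    rw [if_neg (by omega), if_pos h5]
    rfl
  · rw [hu] at h2; simp at h2
    have h4 : wt (flipAt u i) + 1 = wt u := by
      rw [flipAt, hu]; simpa using h2
    have h5 : wt (flipAt u i) + wt (negc u) + 1 = n := by omega
    rw [if_neg (by omega), if_neg (by omega), if_pos h5]
    rfl

lemma Fext_high {f : (Fin n → Bool) → Fin n → Bool} {x y : Fin n → Bool}
    (h : n + 2 ≤ wt x + wt y) : ∀ c, Fext f (pair x y) c = true := by
  have hnc : ∀ i : Fin n, ¬(y = negc x ∨ flipAt y i = negc x) := by
    intro i
    rintro (hc | hc)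
    · have := wt_of_diag hc; omega
    · rcases wt_of_near hc with ⟨_, hw⟩ | ⟨_, hw⟩ <;> omega
  intro c
  rcases c with i | i
  · rw [Fext_inl, F1_weight (hnc i)]
    rw [if_neg (by omega), if_neg (by omega), if_neg (by omega), if_pos h]
  · rw [Fext_inr]
    have hd : ¬(negc x = negc (negc y) ∨ flipAt (negc x) i = negc (negc y)) := by
      rw [dual_cond]; exact hnc i
    rw [F1_weight hd]
    have h1 := wt_negc x
    have h2 := wt_negc y
    rw [if_neg (by omega), if_neg (by omega), if_neg (by omega), if_neg (by omega)]
    rfl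

lemma Fext_low {f : (Fin n → Bool) → Fin n → Bool} {x y : Fin n → Bool}
    (h : wt x + wt y + 2 ≤ n) : ∀ c, Fext f (pair x y) c = false := by
  have hnc : ∀ i : Fin n, ¬(y = negc x ∨ flipAt y i = negc x) := by
    intro i
    rintro (hc | hc)
    · have := wt_of_diag hc; omega
    · rcases wt_of_near hc with ⟨_, hw⟩ | ⟨_, hw⟩ <;> omega
  intro c
  rcases c with i | i
  · rw [Fext_inl, F1_weight (hnc i)]
    rw [if_neg (by omega), if_neg (by omega), if_neg (by omega), if_neg (by omega)]
  · rw [Fext_inr]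
    have hd : ¬(negc x = negc (negc y) ∨ flipAt (negc x) i = negc (negc y)) := by
      rw [dual_cond]; exact hnc i
    rw [F1_weight hd]
    have h1 := wt_negc x
    have h2 := wt_negc y
    rw [if_neg (by omega), if_neg (by omega), if_neg (by omega),
        if_pos (by omega : n + 2 ≤ wt (negc y) + wt (negc x))]
    rfl

lemma shape_n {f : (Fin n → Bool) → Fin n → Bool} {x y : Fin n → Bool}
    (h : wt x + wt y = n) :
    y = negc x ∨ (y ≠ negc x ∧ ∀ c, Fext f (pair x y) c = !(pair x y c)) := by
  by_cases hd : y = negc x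
  · exact Or.inl hd
  · right
    refine ⟨hd, ?_⟩
    have hnc : ∀ i : Fin n, ¬(y = negc x ∨ flipAt y i = negc x) := by
      intro i
      rintro (hc | hc)
      · exact hd hc
      · rcases wt_of_near hc with ⟨_, hw⟩ | ⟨_, hw⟩ <;> omega
    intro c
    rcases c with i | i
    · rw [Fext_inl, F1_weight (hnc i), if_pos h]; rfl
    · rw [Fext_inr]
      have hdd : ¬(negc x = negc (negc y) ∨ flipAt (negc x) i = negc (negc y)) := by
        rw [dual_cond]; exact hnc i
      rw [F1_weight hdd]
      have h1 := wt_negc x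
      have h2 := wt_negc y
      rw [if_pos (by omega : wt (negc y) + wt (negc x) = n)]
      simp [negc]

lemma shape_nm1 {f : (Fin n → Bool) → Fin n → Bool} {x y : Fin n → Bool}
    (h : wt x + wt y + 1 = n) :
    (∃ i, x i = false ∧ pair x y = Mid x i) ∨ (∀ c, Fext f (pair x y) c = false) := by
  by_cases hex : ∃ i, flipAt y i = negc x
  · left
    obtain ⟨i, hi⟩ := hex
    have hy := near_iff.mp hi
    have hxi : x i = false := by
      rcases wt_of_near hi with ⟨_, hw⟩ | ⟨hxi, _⟩
      · omega
      · exact hxi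
    exact ⟨i, hxi, by rw [hy]; rfl⟩
  · right
    push_neg at hex
    have hnc : ∀ i : Fin n, ¬(y = negc x ∨ flipAt y i = negc x) := by
      intro i
      rintro (hc | hc)
      · have := wt_of_diag hc; omega
      · exact hex i hc
    intro c
    rcases c with i | i
    · rw [Fext_inl, F1_weight (hnc i)]
      rw [if_neg (by omega), if_neg (by omega), if_pos h]
    · rw [Fext_inr]
      have hdd : ¬(negc x = negc (negc y) ∨ flipAt (negc x) i = negc (negc y)) := by
        rw [dual_cond]; exact hnc i
      rw [F1_weight hdd]
      have h1 := wt_negc x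
      have h2 := wt_negc y
      rw [if_neg (by omega), if_pos (by omega : wt (negc y) + wt (negc x) = n + 1)]
      rfl

lemma shape_np1 {f : (Fin n → Bool) → Fin n → Bool} {x y : Fin n → Bool}
    (h : wt x + wt y = n + 1) :
    (∃ i, x i = true ∧ pair x y = Mid x i) ∨ (∀ c, Fext f (pair x y) c = true) := by
  by_cases hex : ∃ i, flipAt y i = negc x
  · left
    obtain ⟨i, hi⟩ := hex
    have hy := near_iff.mp hi
    have hxi : x i = true := by
      rcases wt_of_near hi with ⟨hxi, _⟩ | ⟨_, hw⟩
      · exact hxi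
      · omega
    exact ⟨i, hxi, by rw [hy]; rfl⟩
  · right
    push_neg at hex
    have hnc : ∀ i : Fin n, ¬(y = negc x ∨ flipAt y i = negc x) := by
      intro i
      rintro (hc | hc)
      · have := wt_of_diag hc; omega
      · exact hex i hc
    intro c
    rcases c with i | i
    · rw [Fext_inl, F1_weight (hnc i)]
      rw [if_neg (by omega), if_pos h]
    · rw [Fext_inr]
      have hdd : ¬(negc x = negc (negc y) ∨ flipAt (negc x) i = negc (negc y)) := by
        rw [dual_cond]; exact hnc i
      rw [F1_weight hdd]
      have h1 := wt_negc x
      have h2 := wt_negc y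
      rw [if_neg (by omega), if_neg (by omega),
          if_pos (by omega : wt (negc y) + wt (negc x) + 1 = n)]
      rfl

section Paths

variable {I : Type*} [DecidableEq I] {f : (I → Bool) → I → Bool}

lemma pathLen_zero (x : I → Bool) : PathLen f x x 0 :=
  ⟨fun _ => x, rfl, rfl, fun k hk => absurd hk (Nat.not_lt_zero k)⟩

lemma pathLen_zero_iff {x y : I → Bool} : PathLen f x y 0 ↔ x = y := by
  constructor
  · rintro ⟨p, h0, hl, _⟩; rw [← h0, hl]
  · rintro rfl; exact pathLen_zero x

lemma pathLen_succ {x y : I → Bool} {l : ℕ} :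
    PathLen f x y (l + 1) ↔ ∃ z, Step f x z ∧ PathLen f z y l := by
  constructor
  · rintro ⟨p, h0, hl, hs⟩
    refine ⟨p 1, ?_, fun k => p (k + 1), rfl, hl, fun k hk => hs (k + 1) (by omega)⟩
    rw [← h0]; exact hs 0 (by omega)
  · rintro ⟨z, hz, p, h0, hl, hs⟩
    refine ⟨fun k => if k = 0 then x else p (k - 1), by simp, by simp [hl], ?_⟩
    intro k hk
    rcases Nat.eq_zero_or_pos k with rfl | hkpos
    · simpa [h0] using hz
    · have h1 : ¬ (k = 0) := by omega
      have h2 : ¬ (k + 1 = 0) := by omega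
      simp only [h1, h2, if_false]
      have : k - 1 + 1 = k + 1 - 1 := by omega
      rw [show k + 1 - 1 = (k-1) + 1 by omega]
      exact hs (k - 1) (by omega)

end Paths

variable {f : (Fin n → Bool) → Fin n → Bool}

lemma posLoop (hf : NoNegLoop f) (x : Fin n → Bool) (i : Fin n) :
    f (Function.update x i true) i = true ∨ f (Function.update x i false) i = false := by
  by_contra h
  push_neg at h
  exact hf i ⟨x, by simpa using h.1, by simpa using h.2⟩

lemma W_diag (x : Fin n → Bool) : W (pair x (negc x)) = n := by
  rw [W_pair]; exact wt_negc x

lemma step_from_diag {x : Fin n → Bool} {m : (Fin n ⊕ Fin n) → Bool}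
    (h : Step (Fext f) (pair x (negc x)) m) :
    ∃ i, f x i ≠ x i ∧
      (m = Mid (Function.update x i (f x i)) i ∨ m = Mid x i) := by
  obtain ⟨c, hne, hm⟩ := h
  rw [Fext_diag] at hne hm
  rcases c with i | i
  · simp only [pair_inl] at hne hm
    refine ⟨i, hne, Or.inl ?_⟩
    have hval : f x i = !(x i) := bool_ne hne
    have hY : Function.update (negc (Function.update x i (f x i))) i
        ((Function.update x i (f x i)) i) = negc x := by
      rw [Function.update_self, negc_update, Function.update_idem, hval]
      exact update_self_of rfl
    rw [hm, update_pair_inl, Mid, hY]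
  · simp only [pair_inr] at hne hm
    have hfx : f x i ≠ x i := by
      intro h'
      apply hne
      simp [negc, h']
    refine ⟨i, hfx, Or.inr ?_⟩
    have hval : f x i = !(x i) := bool_ne hfx
    have hv2 : negc (f x) i = x i := by simp [negc, hval]
    rw [hm, hv2, update_pair_inr, Mid]

lemma step_from_mid (hf : NoNegLoop f) {u : Fin n → Bool} {i : Fin n}
    {m' : (Fin n ⊕ Fin n) → Bool} (h : Step (Fext f) (Mid u i) m') :
    (f u i ≠ u i ∧
        m' = pair (Function.update u i (f u i)) (negc (Function.update u i (f u i)))) ∨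
    (f (flipAt u i) i = u i ∧ m' = pair u (negc u)) ∨
    (n + 2 ≤ W m') ∨ (W m' + 2 ≤ n) := by
  obtain ⟨c, hne, hm⟩ := h
  rcases c with j | j
  · rcases eq_or_ne i j with rfl | hj
    · rw [Fext_Mid_inl_self] at hne hm
      have hMi : Mid u i (Sum.inl i) = u i := rfl
      rw [hMi] at hne
      left
      refine ⟨hne, ?_⟩
      have hval : f u i = !(u i) := bool_ne hne
      have hY : Function.update (negc u) i (u i)
          = negc (Function.update u i (f u i)) := by
        rw [negc_update, hval, Bool.not_not]
      rw [hm, Mid, update_pair_inl, hY]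
    · have hj' : j ≠ i := hj.symm
      rw [Fext_Mid_inl_other f u hj'] at hne hm
      have hMj : Mid u i (Sum.inl j) = u j := rfl
      rw [hMj] at hne
      have huj : u j = !(u i) := bool_ne (Ne.symm hne)
      rcases wt_midY u i with ⟨hu, hw⟩ | ⟨hu, hw⟩
      · right; right; left
        have hujf : u j = false := by rw [huj, hu]; rfl
        have h2 : wt (Function.update u j (u i)) = wt u + 1 := by
          rw [hu]; exact wt_update_true hujf
        rw [hm]
        simp only [Mid]
        rw [update_pair_inl, W_pair, h2]
        omega
      · right; right; right
        have hujt : u j = true := by rw [huj, hu]; rfl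
        have h2 : wt (Function.update u j (u i)) + 1 = wt u := by
          rw [hu]; exact wt_update_false hujt
        rw [hm]
        simp only [Mid]
        rw [update_pair_inl, W_pair]
        omega
  · rcases eq_or_ne i j with rfl | hj
    · rw [Fext_Mid_inr_self] at hne hm
      have hMi : Mid u i (Sum.inr i) = u i := by
        show Function.update (negc u) i (u i) i = u i
        rw [Function.update_self]
      rw [hMi] at hne
      have hc : f (flipAt u i) i = u i := by
        rcases hb : f (flipAt u i) i <;> rcases hu : u i <;>
          rw [hb, hu] at hne <;> simp_all
      right; left
      refine ⟨hc, ?_⟩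
      rw [hm, hc, Mid, update_pair_inr, Function.update_idem]
      have hval : Function.update (negc u) i (!(u i))
          = Function.update (negc u) i (negc u i) := rfl
      rw [hval, Function.update_eq_self]
    · have hj' : j ≠ i := hj.symm
      rw [Fext_Mid_inr_other f u hj'] at hne hm
      have hMj : Mid u i (Sum.inr j) = !(u j) := by
        show Function.update (negc u) i (u i) j = !(u j)
        rw [Function.update_of_ne hj']; rfl
      rw [hMj] at hne
      have huj : u j = u i := by
        rcases hb : u j <;> rcases hu : u i <;> rw [hb, hu] at hne <;> simp_all
      have hYj : Function.update (negc u) i (u i) j = !(u j) := by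
        rw [Function.update_of_ne hj']; rfl
      rcases wt_midY u i with ⟨hu, hw⟩ | ⟨hu, hw⟩
      · right; right; left
        have hujt : u j = true := huj.trans hu
        rw [hm]
        simp only [Mid]
        rw [update_pair_inr, W_pair, hu]
        rw [hu] at hw hYj
        have hYjf : Function.update (negc u) i true j = false := by
          rw [hYj, hujt]; rfl
        rw [wt_update_true hYjf]
        omega
      · right; right; right
        have hujf : u j = false := huj.trans hu
        rw [hm]
        simp only [Mid]
        rw [update_pair_inr, W_pair, hu]
        rw [hu] at hw hYj
        have hYjt : Function.update (negc u) i false j = true := by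
          rw [hYj, hujf]; rfl
        have h2 := wt_update_false (x := Function.update (negc u) i false) (i := j) hYjt
        omega

lemma trap_high : ∀ (L : ℕ) {z w : (Fin n ⊕ Fin n) → Bool},
    n + 2 ≤ W z → PathLen (Fext f) z w L → n + 2 ≤ W w := by
  intro L
  induction L with
  | zero =>
    intro z w h hp
    rw [pathLen_zero_iff] at hp
    rwa [← hp]
  | succ L ih =>
    intro z w h hp
    rw [pathLen_succ] at hp
    obtain ⟨m, ⟨c, hne, hm⟩, hp⟩ := hp
    have hzp := eq_pair z
    have hall : ∀ c, Fext f z c = true := by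
      rw [hzp]; exact Fext_high h
    rw [hall c] at hne hm
    have hzc : z c = false := bool_ne (Ne.symm hne)
    have hWm : W m = W z + 1 := by
      rcases c with i | i
      · rw [hm, hzp, update_pair_inl, W_pair]
        have : (fun k => z (Sum.inl k)) i = false := hzc
        rw [wt_update_true this, W_pair]
        omega
      · rw [hm, hzp, update_pair_inr, W_pair]
        have : (fun k => z (Sum.inr k)) i = false := hzc
        rw [wt_update_true this, W_pair]
        omega
    exact ih (by omega) hp

lemma trap_low : ∀ (L : ℕ) {z w : (Fin n ⊕ Fin n) → Bool},
    W z + 2 ≤ n → PathLen (Fext f) z w L → W w + 2 ≤ n := by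
  intro L
  induction L with
  | zero =>
    intro z w h hp
    rw [pathLen_zero_iff] at hp
    rwa [← hp]
  | succ L ih =>
    intro z w h hp
    rw [pathLen_succ] at hp
    obtain ⟨m, ⟨c, hne, hm⟩, hp⟩ := hp
    have hzp := eq_pair z
    have hall : ∀ c, Fext f z c = false := by
      rw [hzp]; exact Fext_low h
    rw [hall c] at hne hm
    have hzc : z c = true := by
      rcases hb : z c
      · rw [hb] at hne; exact absurd rfl hne
      · rfl
    have hWm : W m + 1 = W z := by
      rcases c with i | i
      · rw [hm, hzp, update_pair_inl, W_pair]
        have : (fun k => z (Sum.inl k)) i = true := hzc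
        rw [W_pair]
        have h2 := wt_update_false (x := fun k => z (Sum.inl k)) (i := i) this
        omega
      · rw [hm, hzp, update_pair_inr, W_pair]
        have : (fun k => z (Sum.inr k)) i = true := hzc
        rw [W_pair]
        have h2 := wt_update_false (x := fun k => z (Sum.inr k)) (i := i) this
        omega
    exact ih (by omega) hp

lemma fwd (l : ℕ) : ∀ x y : Fin n → Bool, PathLen f x y l →
    PathLen (Fext f) (pair x (negc x)) (pair y (negc y)) (2 * l) := by
  induction l with
  | zero =>
    intro x y h
    rw [pathLen_zero_iff] at h
    subst h
    exact pathLen_zero _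
  | succ l ih =>
    intro x y h
    rw [pathLen_succ] at h
    obtain ⟨z, ⟨i, hfi, hz⟩, hp⟩ := h
    rw [show 2 * (l + 1) = 2 * l + 1 + 1 by ring, pathLen_succ]
    have hval : f x i = !(x i) := bool_ne hfi
    refine ⟨Mid x i, ⟨Sum.inr i, ?_, ?_⟩, ?_⟩
    · rw [Fext_diag]
      simpa [negc] using hfi
    · rw [Fext_diag]
      simp only [pair_inr]
      rw [show negc (f x) i = x i by simp [negc, hval], update_pair_inr]
      rfl
    · rw [pathLen_succ]
      refine ⟨pair z (negc z), ?_, ih z y hp⟩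
      subst hz
      refine ⟨Sum.inl i, ?_, ?_⟩
      · rw [Fext_Mid_inl_self]
        exact hfi
      · rw [Fext_Mid_inl_self, Mid, update_pair_inl]
        have hn : negc (Function.update x i (f x i)) = Function.update (negc x) i (x i) := by
          rw [negc_update, bool_ne hfi, Bool.not_not]
        rw [hn]

lemma bwd (hf : NoNegLoop f) (y : Fin n → Bool) : ∀ (l : ℕ) (x : Fin n → Bool),
    PathLen (Fext f) (pair x (negc x)) (pair y (negc y)) (2 * l) → PathLen f x y l := by
  intro l
  induction l with
  | zero =>
    intro x h
    rw [show 2 * 0 = 0 from rfl, pathLen_zero_iff] at h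
    have hxy : x = y := funext fun i => congrFun h (Sum.inl i)
    rw [hxy]
    exact pathLen_zero y
  | succ l ih =>
    intro x h
    rw [show 2 * (l + 1) = 2 * l + 1 + 1 by ring, pathLen_succ] at h
    obtain ⟨m, hs1, h⟩ := h
    rw [pathLen_succ] at h
    obtain ⟨m', hs2, hp⟩ := h
    obtain ⟨i, hfi, hm⟩ := step_from_diag hs1
    have hWy : W (pair y (negc y)) = n := W_diag y
    have hval : f x i = !(x i) := bool_ne hfi
    rcases hm with hm | hm
    · subst hm
      rcases step_from_mid hf hs2 with ⟨hne, hm'⟩ | ⟨hc, hm'⟩ | hW | hW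
      · exfalso
        have hx1 : (Function.update x i (f x i)) i = f x i := Function.update_self _ _ _
        rw [hx1] at hne
        have h2 : f (Function.update x i (f x i)) i = x i := by
          rw [bool_ne hne, hval, Bool.not_not]
        cases hxi : x i
        · apply hf i
          refine ⟨x, ?_, ?_⟩
          · rw [show Function.update x i true = Function.update x i (f x i) by
              rw [hval, hxi]; rfl]
            rw [h2, hxi]
          · rw [update_self_of hxi, hval, hxi]; rfl
        · apply hf i
          refine ⟨x, ?_, ?_⟩
          · rw [update_self_of hxi, hval, hxi]; rfl
          · rw [show Function.update x i false = Function.update x i (f x i) by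
              rw [hval, hxi]; rfl]
            rw [h2, hxi]
      · rw [pathLen_succ]
        exact ⟨_, ⟨i, hfi, rfl⟩, ih _ (hm' ▸ hp)⟩
      · exfalso; have := trap_high _ hW hp; omega
      · exfalso; have := trap_low _ hW hp; omega
    · subst hm
      rcases step_from_mid hf hs2 with ⟨hne, hm'⟩ | ⟨hc, hm'⟩ | hW | hW
      · rw [pathLen_succ]
        exact ⟨_, ⟨i, hfi, rfl⟩, ih _ (hm' ▸ hp)⟩
      · exfalso
        apply hf i
        cases hxi : x i
        · refine ⟨x, ?_, ?_⟩
          · rw [← flipAt_eq_true hxi, hc, hxi]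
          · rw [update_self_of hxi, hval, hxi]; rfl
        · refine ⟨x, ?_, ?_⟩
          · rw [update_self_of hxi, hval, hxi]; rfl
          · rw [← flipAt_eq_false hxi, hc, hxi]
      · exfalso; have := trap_high _ hW hp; omega
      · exfalso; have := trap_low _ hW hp; omega

lemma mono_flip (hf : NoNegLoop f) (x y : Fin n → Bool) (c₀ : Fin n ⊕ Fin n)
    (h0 : pair x y c₀ = false) :
    ∀ c, Fext f (pair x y) c ≤ Fext f (Function.update (pair x y) c₀ true) c := by
  rcases (show wt x + wt y + 2 ≤ n ∨ wt x + wt y + 1 = n ∨ wt x + wt y = n ∨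
      n + 1 ≤ wt x + wt y by omega) with hs | hs | hs | hs
  · -- low zone
    intro c
    rw [Fext_low hs c]
    exact Bool.false_le _
  · -- weight n - 1
    rcases shape_nm1 (f := f) hs with ⟨i, hxi, hmid⟩ | hbot
    · have hy : y = Function.update (negc x) i (x i) :=
        funext fun j => congrFun hmid (Sum.inr j)
      rcases c₀ with k | k
      · have h0' : x k = false := h0
        rw [update_pair_inl]
        rcases eq_or_ne i k with rfl | hik
        · -- flip inl i : reach the diagonal on update x i true
          have hyd : y = negc (Function.update x i true) := by
            rw [negc_update, hy, hxi]; rfl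
          have hgw : Fext f (pair (Function.update x i true) y)
              = pair (f (Function.update x i true)) (negc (f (Function.update x i true))) := by
            rw [hyd]; exact Fext_diag f _
          intro c
          rw [hmid, hgw]
          rcases c with j | j <;> rcases eq_or_ne i j with rfl | hij
          · rw [Fext_Mid_inl_self]
            simp only [pair_inl]
            apply ble
            intro ht
            rcases posLoop hf x i with hp | hp
            · exact hp
            · rw [update_self_of hxi] at hp
              simp [ht] at hp
          · rw [Fext_Mid_inl_other f x hij.symm, hxi]
            exact Bool.false_le _
          · rw [Fext_Mid_inr_self]
            simp only [pair_inr]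
            rw [flipAt_eq_true hxi]
            exact le_rfl
          · rw [Fext_Mid_inr_other f x hij.symm, hxi]
            exact Bool.false_le _
        · -- flip inl k, k ≠ i
          have hwn : wt (Function.update x k true) + wt y = n := by
            rw [wt_update_true h0']; omega
          rcases shape_n (f := f) hwn with hd | ⟨hnd, heval⟩
          · exfalso
            have h1 : y k = true := by
              rw [hy, Function.update_of_ne hik.symm]
              simp [negc, h0']
            have h2 : y k = false := by
              have := congrFun hd k
              rw [this]
              simp [negc]
            rw [h1] at h2
            simp at h2
          · intro c
            rw [hmid]
            rcases c with j | j <;> rcases eq_or_ne i j with rfl | hij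
            · rw [Fext_Mid_inl_self, heval (Sum.inl i)]
              simp only [pair_inl]
              rw [Function.update_of_ne hik, hxi]
              exact Bool.le_true _
            · rw [Fext_Mid_inl_other f x hij.symm, hxi]
              exact Bool.false_le _
            · rw [Fext_Mid_inr_self, heval (Sum.inr i)]
              simp only [pair_inr]
              have hyi : y i = false := by rw [hy, Function.update_self, hxi]
              rw [hyi]
              exact Bool.le_true _
            · rw [Fext_Mid_inr_other f x hij.symm, hxi]
              exact Bool.false_le _
      · have h0' : y k = false := h0
        rw [update_pair_inr]
        rcases eq_or_ne i k with rfl | hik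
        · -- flip inr i : reach the diagonal on x
          have hyn : Function.update y i true = negc x := by
            rw [hy, Function.update_idem]
            have htr : (true : Bool) = negc x i := by simp [negc, hxi]
            rw [htr, Function.update_eq_self]
          rw [hyn]
          intro c
          rw [hmid, Fext_diag]
          rcases c with j | j <;> rcases eq_or_ne i j with rfl | hij
          · rw [Fext_Mid_inl_self]
            simp only [pair_inl]
            exact le_rfl
          · rw [Fext_Mid_inl_other f x hij.symm, hxi]
            exact Bool.false_le _
          · rw [Fext_Mid_inr_self]
            simp only [pair_inr]
            apply ble
            intro ht
            have hft : f (flipAt x i) i = false := by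
              rcases hb : f (flipAt x i) i
              · rfl
              · rw [hb] at ht; simp at ht
            rw [flipAt_eq_true hxi] at hft
            rcases posLoop hf x i with hp | hp
            · simp [hp] at hft
            · rw [update_self_of hxi] at hp
              show (!(f x i)) = true
              rw [hp]; rfl
          · rw [Fext_Mid_inr_other f x hij.symm, hxi]
            exact Bool.false_le _
        · -- flip inr k, k ≠ i
          have hwn : wt x + wt (Function.update y k true) = n := by
            rw [wt_update_true h0']; omega
          rcases shape_n (f := f) hwn with hd | ⟨hnd, heval⟩
          · exfalso
            have hxk : x k = true := by
              have h1 := congrFun hy k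
              rw [Function.update_of_ne hik.symm, h0'] at h1
              simpa [negc] using h1.symm
            have := congrFun hd k
            rw [Function.update_self] at this
            simp [negc, hxk] at this
          · intro c
            rw [hmid]
            rcases c with j | j <;> rcases eq_or_ne i j with rfl | hij
            · rw [Fext_Mid_inl_self, heval (Sum.inl i)]
              simp only [pair_inl]
              rw [hxi]
              exact Bool.le_true _
            · rw [Fext_Mid_inl_other f x hij.symm, hxi]
              exact Bool.false_le _
            · rw [Fext_Mid_inr_self, heval (Sum.inr i)]
              simp only [pair_inr]
              rw [Function.update_of_ne hik]
              have hyi : y i = false := by rw [hy, Function.update_self, hxi]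
              rw [hyi]
              exact Bool.le_true _
            · rw [Fext_Mid_inr_other f x hij.symm, hxi]
              exact Bool.false_le _
    · intro c
      rw [hbot c]
      exact Bool.false_le _
  · -- weight n
    rcases shape_n (f := f) hs with hd | ⟨hnd, heval⟩
    · subst hd
      rcases c₀ with k | k
      · have h0' : x k = false := h0
        rw [update_pair_inl]
        have hwmid : pair (Function.update x k true) (negc x)
            = Mid (Function.update x k true) k := by
          rw [Mid]
          congr 1
          rw [Function.update_self, negc_update, Function.update_idem]
          have htr : (true : Bool) = negc x k := by simp [negc, h0']
          rw [htr, Function.update_eq_self]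
        rw [hwmid, Fext_diag]
        intro c
        rcases c with j | j <;> rcases eq_or_ne k j with rfl | hkj
        · simp only [pair_inl]
          rw [Fext_Mid_inl_self]
          apply ble
          intro ht
          rcases posLoop hf x k with hp | hp
          · exact hp
          · rw [update_self_of h0'] at hp
            simp [hp] at ht
        · rw [Fext_Mid_inl_other f _ hkj.symm, Function.update_self]
          exact Bool.le_true _
        · simp only [pair_inr]
          rw [Fext_Mid_inr_self]
          have hflip : flipAt (Function.update x k true) k = x := by
            rw [flipAt, Function.update_self, Function.update_idem]
            exact update_self_of h0'
          rw [hflip]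
          exact le_rfl
        · rw [Fext_Mid_inr_other f _ hkj.symm, Function.update_self]
          exact Bool.le_true _
      · have h0' : x k = true := by
          have h1 : negc x k = false := h0
          simpa [negc] using h1
        rw [update_pair_inr]
        have hwmid : pair x (Function.update (negc x) k true) = Mid x k := by
          rw [Mid, h0']
        rw [hwmid, Fext_diag]
        intro c
        rcases c with j | j <;> rcases eq_or_ne k j with rfl | hkj
        · simp only [pair_inl]
          rw [Fext_Mid_inl_self]
        · rw [Fext_Mid_inl_other f _ hkj.symm, h0']
          exact Bool.le_true _
        · simp only [pair_inr]
          rw [Fext_Mid_inr_self, flipAt_eq_false h0']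
          apply ble
          intro ht
          have hfx : f x k = false := by simpa [negc] using ht
          rcases posLoop hf x k with hp | hp
          · rw [update_self_of h0'] at hp
            simp [hp] at hfx
          · rw [hp]; rfl
        · rw [Fext_Mid_inr_other f _ hkj.symm, h0']
          exact Bool.le_true _
    · -- negc shape at weight n
      rcases c₀ with k | k
      · have h0' : x k = false := h0
        rw [update_pair_inl]
        have hwn : wt (Function.update x k true) + wt y = n + 1 := by
          rw [wt_update_true h0']; omega
        rcases shape_np1 (f := f) hwn with ⟨i, hui, hmid⟩ | htop
        · rcases eq_or_ne i k with rfl | hik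
          · exfalso
            apply hnd
            have hy2 : y = Function.update (negc (Function.update x i true)) i
                ((Function.update x i true) i) :=
              funext fun j => congrFun hmid (Sum.inr j)
            rw [Function.update_self, negc_update, Function.update_idem] at hy2
            rw [show (true : Bool) = negc x i by simp [negc, h0'],
              Function.update_eq_self] at hy2
            exact hy2
          · have hxi : x i = true := by
              have h1 := hui
              rwa [Function.update_of_ne hik] at h1
            intro c
            rw [heval c, hmid]
            rcases c with j | j <;> rcases eq_or_ne i j with rfl | hij
            · simp only [pair_inl]
              rw [hxi]
              exact Bool.false_le _
            · rw [Fext_Mid_inl_other f _ hij.symm, hui]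
              exact Bool.le_true _
            · simp only [pair_inr]
              have hyi : y i = true := by
                have h2 := congrFun hmid (Sum.inr i)
                rw [show Mid (Function.update x k true) i (Sum.inr i)
                    = (Function.update x k true) i from by
                  show Function.update _ i _ i = _
                  rw [Function.update_self]] at h2
                simp only [pair_inr] at h2
                rw [h2, hui]
              rw [hyi]
              exact Bool.false_le _
            · rw [Fext_Mid_inr_other f _ hij.symm, hui]
              exact Bool.le_true _
        · intro c
          rw [htop c]
          exact Bool.le_true _
      · have h0' : y k = false := h0
        rw [update_pair_inr]
        have hwn : wt x + wt (Function.update y k true) = n + 1 := by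
          rw [wt_update_true h0']; omega
        rcases shape_np1 (f := f) hwn with ⟨i, hui, hmid⟩ | htop
        · rcases eq_or_ne i k with rfl | hik
          · exfalso
            apply hnd
            have hy2 : Function.update y i true = Function.update (negc x) i (x i) :=
              funext fun j => congrFun hmid (Sum.inr j)
            funext j
            rcases eq_or_ne j i with rfl | hji
            · rw [h0']
              simp [negc, hui]
            · have h2 := congrFun hy2 j
              rw [Function.update_of_ne hji, Function.update_of_ne hji] at h2
              exact h2
          · intro c
            rw [heval c, hmid]
            rcases c with j | j <;> rcases eq_or_ne i j with rfl | hij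
            · simp only [pair_inl]
              rw [hui]
              exact Bool.false_le _
            · rw [Fext_Mid_inl_other f _ hij.symm, hui]
              exact Bool.le_true _
            · simp only [pair_inr]
              have hyi : y i = true := by
                have h2 := congrFun hmid (Sum.inr i)
                simp only [pair_inr] at h2
                rw [Function.update_of_ne hik] at h2
                rw [show Mid x i (Sum.inr i) = x i from by
                  show Function.update _ i _ i = _
                  rw [Function.update_self]] at h2
                rw [h2, hui]
              rw [hyi]
              exact Bool.false_le _
            · rw [Fext_Mid_inr_other f _ hij.symm, hui]
              exact Bool.le_true _
        · intro c
          rw [htop c]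
          exact Bool.le_true _
  · -- high zone
    rcases c₀ with k | k
    · have h0' : x k = false := h0
      rw [update_pair_inl]
      intro c
      have hw : n + 2 ≤ wt (Function.update x k true) + wt y := by
        rw [wt_update_true h0']; omega
      rw [Fext_high hw c]
      exact Bool.le_true _
    · have h0' : y k = false := h0
      rw [update_pair_inr]
      intro c
      have hw : n + 2 ≤ wt x + wt (Function.update y k true) := by
        rw [wt_update_true h0']; omega
      rw [Fext_high hw c]
      exact Bool.le_true _

lemma mono_g (hf : NoNegLoop f) : Monotone (Fext f) := by
  intro z w hzw
  suffices H : ∀ (k : ℕ) (z : (Fin n ⊕ Fin n) → Bool), z ≤ w →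
      (Finset.univ.filter fun c => z c ≠ w c).card = k → Fext f z ≤ Fext f w from
    H _ z hzw rfl
  intro k
  induction k with
  | zero =>
    intro z hz hcard
    have hzempty : (Finset.univ.filter fun c => z c ≠ w c) = ∅ :=
      Finset.card_eq_zero.mp hcard
    have hzw' : z = w := by
      funext c
      by_contra hc
      have : c ∈ (Finset.univ.filter fun c => z c ≠ w c) := by simp [hc]
      rw [hzempty] at this
      exact absurd this (Finset.notMem_empty c)
    rw [hzw']
  | succ k ih =>
    intro z hz hcard
    have hex : ∃ c, z c ≠ w c := by
      by_contra hno
      push_neg at hno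
      have : (Finset.univ.filter fun c => z c ≠ w c) = ∅ := by
        apply Finset.filter_false_of_mem
        intro c _
        simp [hno c]
      rw [this] at hcard
      simp at hcard
    obtain ⟨c₀, hc₀⟩ := hex
    have hzc : z c₀ = false ∧ w c₀ = true := by
      have hle := hz c₀
      rcases hb : z c₀ <;> rcases hb2 : w c₀ <;> rw [hb, hb2] at hle hc₀
      · simp_all
      · exact ⟨rfl, rfl⟩
      · exact absurd hle (by simp)
      · simp_all
    have hle1 : Fext f z ≤ Fext f (Function.update z c₀ true) := by
      have hzp := eq_pair z
      intro c
      rw [hzp]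
      exact mono_flip hf _ _ c₀ (by rw [← hzp]; exact hzc.1) c
    have hle2 : Fext f (Function.update z c₀ true) ≤ Fext f w := by
      apply ih
      · intro c
        by_cases hc : c = c₀
        · subst hc
          rw [Function.update_self, hzc.2]
        · rw [Function.update_of_ne hc]
          exact hz c
      · have hset : (Finset.univ.filter fun c => Function.update z c₀ true c ≠ w c)
            = (Finset.univ.filter fun c => z c ≠ w c).erase c₀ := by
          ext c
          by_cases hc : c = c₀
          · subst hc
            simp [Function.update_self, hzc.2]
          · simp [Function.update_of_ne hc, hc]
        have hmem : c₀ ∈ (Finset.univ.filter fun c => z c ≠ w c) := by simp [hc₀]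
        rw [hset, Finset.card_erase_of_mem hmem, hcard]
        rfl
    exact le_trans hle1 hle2

end S13

theorem stmt_13 {n : ℕ} (f : (Fin n → Bool) → Fin n → Bool)
    (hf : NoNegLoop f) :
    ∃ g : ((Fin n ⊕ Fin n) → Bool) → (Fin n ⊕ Fin n) → Bool, Monotone g ∧
      (∀ x, f x = x ↔ g (pair x (negc x)) = pair x (negc x)) ∧
      (∀ x y (l : ℕ), PathLen f x y l ↔
        PathLen g (pair x (negc x)) (pair y (negc y)) (2 * l)) := by
  refine ⟨Fext f, S13.mono_g hf, ?_, ?_⟩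
  · intro x
    constructor
    · intro h
      rw [S13.Fext_diag, h]
    · intro h
      funext i
      have h2 := congrFun h (Sum.inl i)
      rw [S13.Fext_diag] at h2
      simpa using h2
  · intro x y l
    exact ⟨S13.fwd l x y, S13.bwd hf y l x⟩
end

section
/- Let x¹, ..., x^r be an enumeration of {0,1}^n (r = 2^n) with consecutive Hamming distance 1 (e.g., a Gray code), and define f : {0,1}^n → {0,1}^n by f(x^k) = x^{k+1} for k < r and f(x^r) = x^r. Then the set of transitions of Γ(f) is exactly {x^k → x^{k+1} : 1 ≤ k < r}, x^r is the unique fixed point of f, d_{Γ(f)}(x¹, x^r) = 2^n − 1, and G(f) has no negative loops. -/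
lemma ham_one_update {n : ℕ} {x y : Fin n → Bool} (h : ham x y = 1) :
    ∃ j, x j ≠ y j ∧ y = Function.update x j (y j) := by
  obtain ⟨j, hj⟩ := Finset.card_eq_one.mp h
  have hjmem : x j ≠ y j := by
    have : j ∈ Finset.univ.filter fun i => x i ≠ y i := by rw [hj]; simp
    simpa using this
  have hoth : ∀ i, i ≠ j → x i = y i := by
    intro i hij
    by_contra hne
    have : i ∈ Finset.univ.filter fun i => x i ≠ y i := by
      simp only [Finset.mem_filter, Finset.mem_univ, true_and]
      exact fun h' => hne h'
    rw [hj] at this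
    exact hij (by simpa using this)
  refine ⟨j, hjmem, ?_⟩
  funext i
  by_cases hij : i = j
  · subst hij; simp
  · rw [Function.update_of_ne hij]
    exact (hoth i hij).symm

theorem stmt_15 {n : ℕ} (e : Fin (2 ^ n) → (Fin n → Bool))
    (he : Function.Bijective e)
    (hgray : ∀ k : ℕ, (hk : k + 1 < 2 ^ n) →
      ham (e ⟨k, Nat.lt_of_succ_lt hk⟩) (e ⟨k + 1, hk⟩) = 1)
    (f : (Fin n → Bool) → Fin n → Bool)
    (hf1 : ∀ k : ℕ, (hk : k + 1 < 2 ^ n) →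
      f (e ⟨k, Nat.lt_of_succ_lt hk⟩) = e ⟨k + 1, hk⟩)
    (hf2 : f (e ⟨2 ^ n - 1, Nat.sub_lt (Nat.two_pow_pos n) one_pos⟩) =
      e ⟨2 ^ n - 1, Nat.sub_lt (Nat.two_pow_pos n) one_pos⟩) :
    (∀ x y, Step f x y ↔ ∃ (k : ℕ) (hk : k + 1 < 2 ^ n),
        x = e ⟨k, Nat.lt_of_succ_lt hk⟩ ∧ y = e ⟨k + 1, hk⟩) ∧
    (∀ x, f x = x ↔ x = e ⟨2 ^ n - 1, Nat.sub_lt (Nat.two_pow_pos n) one_pos⟩) ∧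
    (PathLen f (e ⟨0, Nat.two_pow_pos n⟩)
        (e ⟨2 ^ n - 1, Nat.sub_lt (Nat.two_pow_pos n) one_pos⟩) (2 ^ n - 1) ∧
      ∀ l, PathLen f (e ⟨0, Nat.two_pow_pos n⟩)
        (e ⟨2 ^ n - 1, Nat.sub_lt (Nat.two_pow_pos n) one_pos⟩) l → 2 ^ n - 1 ≤ l) ∧
    NoNegLoop f := by
  have hlast : 2 ^ n - 1 < 2 ^ n := Nat.sub_lt (Nat.two_pow_pos n) one_pos
  -- Step characterization
  have hstep : ∀ x y, Step f x y ↔ ∃ (k : ℕ) (hk : k + 1 < 2 ^ n),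
      x = e ⟨k, Nat.lt_of_succ_lt hk⟩ ∧ y = e ⟨k + 1, hk⟩ := by
    intro x y
    constructor
    · rintro ⟨i, hne, hy⟩
      obtain ⟨⟨m, hm⟩, rfl⟩ := he.2 x
      by_cases hm1 : m + 1 < 2 ^ n
      · refine ⟨m, hm1, rfl, ?_⟩
        have hfm := hf1 m hm1
        obtain ⟨j, hj, hupd⟩ := ham_one_update (hgray m hm1)
        have hij : i = j := by
          by_contra hij
          apply hne
          rw [hfm, hupd, Function.update_of_ne hij]
        subst hij
        rw [hy, hfm, hupd]
        simp
      · exfalso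
        have hm' : m = 2 ^ n - 1 := by omega
        apply hne
        have : (⟨m, hm⟩ : Fin (2 ^ n)) = ⟨2 ^ n - 1, hlast⟩ := by
          simp [Fin.ext_iff, hm']
        rw [this, hf2]
    · rintro ⟨k, hk, rfl, rfl⟩
      have hfm := hf1 k hk
      obtain ⟨j, hj, hupd⟩ := ham_one_update (hgray k hk)
      refine ⟨j, ?_, ?_⟩
      · rw [hfm]; exact fun h' => hj h'.symm
      · rw [hfm]; exact hupd
  -- Fixed point characterization
  have hfix : ∀ x, f x = x ↔ x = e ⟨2 ^ n - 1, hlast⟩ := by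
    intro x
    constructor
    · intro hx
      obtain ⟨⟨m, hm⟩, rfl⟩ := he.2 x
      by_cases hm1 : m + 1 < 2 ^ n
      · exfalso
        have hfm := hf1 m hm1
        rw [hx] at hfm
        have := he.1 hfm
        simp [Fin.ext_iff] at this
      · exact congrArg e (Fin.mk_eq_mk.mpr (by omega))
    · rintro rfl; exact hf2
  refine ⟨hstep, hfix, ⟨?_, ?_⟩, ?_⟩
  · -- path exists
    have hlt : ∀ k : ℕ, min k (2 ^ n - 1) < 2 ^ n :=
      fun k => lt_of_le_of_lt (min_le_right _ _) hlast
    refine ⟨fun k => e ⟨min k (2 ^ n - 1), hlt k⟩, ?_, ?_, ?_⟩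
    · exact congrArg e (Fin.mk_eq_mk.mpr (by omega))
    · exact congrArg e (Fin.mk_eq_mk.mpr (by omega))
    · intro k hk
      have hk1 : k + 1 < 2 ^ n := by omega
      refine (hstep _ _).mpr ⟨k, hk1, ?_, ?_⟩
      · exact congrArg e (Fin.mk_eq_mk.mpr (by omega))
      · exact congrArg e (Fin.mk_eq_mk.mpr (by omega))
  · -- lower bound
    rintro l ⟨p, h0, hl, hs⟩
    have hidx : ∀ k, k ≤ l → ∃ hk : k < 2 ^ n, p k = e ⟨k, hk⟩ := by
      intro k
      induction k with
      | zero => intro _; exact ⟨Nat.two_pow_pos n, h0⟩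
      | succ k ih =>
        intro hkl
        obtain ⟨hk, hpk⟩ := ih (by omega)
        obtain ⟨m, hm, hx, hy⟩ := (hstep _ _).mp (hs k (by omega))
        have hmk : m = k := by
          have := he.1 (hx ▸ hpk : e ⟨m, _⟩ = e ⟨k, hk⟩)
          simpa [Fin.ext_iff] using this
        subst hmk
        exact ⟨hm, hy⟩
    obtain ⟨hk, hpl⟩ := hidx l le_rfl
    rw [hl] at hpl
    have := he.1 hpl
    simp [Fin.ext_iff] at this
    omega
  · -- no negative loops
    rintro i ⟨x, h1, h0⟩
    have s1 : Step f (Function.update x i true) (Function.update x i false) := by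
      refine ⟨i, ?_, ?_⟩
      · simp [h1]
      · rw [h1]; simp [Function.update_idem]
    have s0 : Step f (Function.update x i false) (Function.update x i true) := by
      refine ⟨i, ?_, ?_⟩
      · simp [h0]
      · rw [h0]; simp [Function.update_idem]
    obtain ⟨k, hk, hx1, hx0⟩ := (hstep _ _).mp s1
    obtain ⟨m, hm, hx0', hx1'⟩ := (hstep _ _).mp s0
    have e1 := he.1 (hx0 ▸ hx0' : e ⟨k+1, _⟩ = e ⟨m, _⟩)
    have e2 := he.1 (hx1 ▸ hx1' : e ⟨k, _⟩ = e ⟨m+1, _⟩)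
    simp [Fin.ext_iff] at e1 e2
    omega
end

section
/- If the interaction graph G(f) of a Boolean network f : {0,1}^n → {0,1}^n has no positive cycles, then f has at most one fixed point. -/
open Finset Function

theorem even_card_filter_ne_perm {α : Type*} [Fintype α] (σ : Equiv.Perm α) (w : α → Bool) :
    Even #{a | w a ≠ w (σ a)} := by
  rw [even_iff_two_dvd, ← ZMod.natCast_eq_zero_iff, card_filter, Nat.cast_sum]
  have hsum : ∀ a, ((if w a ≠ w (σ a) then 1 else 0 : ℕ) : ZMod 2) =
      (w a).toNat + (w (σ a)).toNat := by
    intro a; cases w a <;> cases w (σ a) <;> decide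
  rw [Fintype.sum_congr _ _ hsum, sum_add_distrib,
    Equiv.sum_comp σ fun a => ((w a).toNat : ZMod 2), ← two_mul]
  exact zero_mul _

theorem exists_mem_periodicPts {α : Type*} [Finite α] [Nonempty α] (g : α → α) :
    ∃ x, x ∈ periodicPts g := by
  obtain ⟨a, b, hab, heq⟩ :=
    Finite.exists_ne_map_eq_of_infinite fun m => g^[m] (Classical.arbitrary α)
  wlog hlt : a < b generalizing a b
  · exact this b a hab.symm heq.symm (by omega)
  refine ⟨g^[a] (Classical.arbitrary α), b - a, by omega, ?_⟩
  rw [IsPeriodicPt, IsFixedPt, ← iterate_add_apply, Nat.sub_add_cancel hlt.le]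
  exact heq.symm

theorem exists_injective_cycle_of_forall_exists_rel {α : Type*} [Finite α] [Nonempty α]
    {R : α → α → Prop} (h : ∀ a, ∃ b, R b a) :
    ∃ (k : ℕ) (v : Fin (k + 1) → α), Injective v ∧ ∀ r, R (v r) (v (r + 1)) := by
  choose g hg using h
  obtain ⟨x, hx⟩ := exists_mem_periodicPts g
  obtain ⟨k, hk⟩ : ∃ k, minimalPeriod g x = k + 1 :=
    Nat.exists_eq_succ_of_ne_zero (minimalPeriod_pos_of_mem_periodicPts hx).ne'
  -- the orbit of `x` under the predecessor map `g`, listed backwards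
  refine ⟨k, fun r => g^[k - r] x, ?_, fun r => ?_⟩
  · intro c d hcd
    have := iterate_injOn_Iio_minimalPeriod (f := g) (x := x)
      (by simp only [Set.mem_Iio]; omega) (by simp only [Set.mem_Iio]; omega) hcd
    omega
  · convert hg (g^[k - (r + 1 : Fin (k + 1))] x) using 1
    rw [← iterate_succ_apply' g]
    rcases eq_or_ne r (Fin.last k) with rfl | hr
    · simp [← hk, iterate_minimalPeriod]
    · have hr' := Fin.val_lt_last hr
      rw [Fin.val_add_one_of_lt (Fin.lt_last_iff_ne_last.mpr hr)]
      dsimp only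
      congr 2
      omega

def SignedArc {n : ℕ} (f : (Fin n → Bool) → Fin n → Bool) (s : Bool) (j i : Fin n) : Prop :=
  if s then PosArc f j i else NegArc f j i

theorem signedArc_of_update {n : ℕ} {f : (Fin n → Bool) → Fin n → Bool} {j i : Fin n}
    {x : Fin n → Bool} {b c : Bool} (h : f (update x j b) i = c)
    (h' : f (update x j (!b)) i = !c) : SignedArc f (decide (b = c)) j i := by
  cases b <;> cases c <;> simp_all [SignedArc, PosArc, NegArc] <;> exact ⟨x, by simp_all⟩

theorem exists_sensitive_coordinate {ι γ : Type*} {β : ι → Type*} [Fintype ι]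
    [DecidableEq ι] (F : (∀ i, β i) → γ) {x w : ∀ i, β i} (h : F x ≠ F w) :
    ∃ j u, F (update u j (x j)) = F x ∧ F (update u j (w j)) ≠ F x := by
  suffices ∀ s : Finset ι, F (s.piecewise w x) ≠ F x →
      ∃ j u, F (update u j (x j)) = F x ∧ F (update u j (w j)) ≠ F x by
    exact this univ (by rwa [piecewise_univ, ne_comm])
  intro s
  induction s using Finset.induction_on with
  | empty => simp
  | insert a s ha ih =>
    intro hs
    by_cases hprev : F (s.piecewise w x) = F x
    · refine ⟨a, s.piecewise w x, ?_, ?_⟩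
      · rwa [← piecewise_eq_of_notMem s w x ha, update_eq_self]
      · rwa [← piecewise_insert]
    · exact ih hprev

theorem exists_signedArc_of_isFixedPt {n : ℕ} {f : (Fin n → Bool) → Fin n → Bool}
    {y z : Fin n → Bool} (hy : f y = y) (hz : f z = z) {i : Fin n} (hi : y i ≠ z i) :
    ∃ j, y j ≠ z j ∧ SignedArc f (decide (z j = z i)) j i := by
  have hyz : f y i ≠ f z i := by rwa [hy, hz]
  obtain ⟨j, u, hu_y, hu_z⟩ := exists_sensitive_coordinate (fun x => f x i) hyz
  simp only [hy] at hu_y hu_z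
  have hj : y j ≠ z j := fun h => hu_z (h ▸ hu_y)
  refine ⟨j, hj, signedArc_of_update (x := u) ?_ ?_⟩
  · simpa [Bool.eq_not_of_ne hi] using hu_z
  · rwa [← Bool.eq_not_of_ne hj, ← Bool.eq_not_of_ne hi]

theorem stmt_18 {n : ℕ} (f : (Fin n → Bool) → Fin n → Bool)
    (hG : ¬ ∃ (k : ℕ) (v : Fin (k + 1) → Fin n) (s : Fin (k + 1) → Bool),
      Function.Injective v ∧
      (∀ i, if s i then PosArc f (v i) (v (i + 1)) else NegArc f (v i) (v (i + 1))) ∧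
      Even ((Finset.univ.filter fun i => s i = false).card)) :
    ∀ y z, f y = y → f z = z → y = z := by
  intro y z hy hz
  by_contra hne
  obtain ⟨i₀, hi₀⟩ := Function.ne_iff.mp hne
  let D := {i // y i ≠ z i}
  have : Nonempty D := ⟨⟨i₀, hi₀⟩⟩
  have hpred : ∀ i : D, ∃ j : D, SignedArc f (decide (z j = z i)) j i := fun i => by
    obtain ⟨j, hj, harc⟩ := exists_signedArc_of_isFixedPt hy hz i.2
    exact ⟨⟨j, hj⟩, harc⟩
  obtain ⟨k, v, hv, hcycle⟩ := exists_injective_cycle_of_forall_exists_rel hpred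
  refine hG ⟨k, Subtype.val ∘ v, fun r => decide (z (v r) = z (v (r + 1))),
    Subtype.val_injective.comp hv, hcycle, ?_⟩
  convert even_card_filter_ne_perm (Equiv.addRight 1) fun r => z (v r) using 3
  simp
end

section
/- If the interaction graph G(f) of a Boolean network f : {0,1}^n → {0,1}^n has no negative cycles, then f has at least one fixed point. -/
namespace SB19
open Function Finset

variable {n : ℕ}

def cnt (s : ℕ → Bool) : ℕ → ℕ
  | 0 => 0
  | k+1 => cnt s k + (if s k then 0 else 1)

lemma cnt_congr {s t : ℕ → Bool} : ∀ k, (∀ i, i < k → s i = t i) → cnt s k = cnt t k := by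
  intro k
  induction k with
  | zero => intro _; rfl
  | succ k ih =>
      intro h
      simp only [cnt, ih (fun i hi => h i (Nat.lt_succ_of_lt hi)), h k (Nat.lt_succ_self k)]

lemma cnt_split (s : ℕ → Bool) (a : ℕ) : ∀ m, cnt s (a + m) = cnt s a + cnt (fun i => s (a + i)) m := by
  intro m
  induction m with
  | zero => simp [cnt]
  | succ m ih =>
      have e1 : a + (m + 1) = (a + m) + 1 := by omega
      rw [e1, show cnt s ((a+m)+1) = cnt s (a+m) + (if s (a+m) then 0 else 1) from rfl, ih,
        Nat.add_assoc]
      rfl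

lemma cnt_eq_card (s : ℕ → Bool) : ∀ k, cnt s k = ((Finset.range k).filter fun i => s i = false).card := by
  intro k
  induction k with
  | zero => rfl
  | succ k ih =>
      rw [Finset.range_add_one, Finset.filter_insert]
      by_cases h : s k = false
      · rw [if_pos h, Finset.card_insert_of_notMem (by simp)]
        simp [cnt, ih, h]
      · rw [if_neg h]
        simp only [Bool.not_eq_false] at h
        simp [cnt, ih, h]

def IsWalk (f : (Fin n → Bool) → Fin n → Bool) (v : ℕ → Fin n) (s : ℕ → Bool) (k : ℕ) : Prop :=
  ∀ i, i < k → if s i then PosArc f (v i) (v (i+1)) else NegArc f (v i) (v (i+1))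

def NegCyc (f : (Fin n → Bool) → Fin n → Bool) : Prop :=
  ∃ (k : ℕ) (v : Fin (k + 1) → Fin n) (s : Fin (k + 1) → Bool),
      Function.Injective v ∧
      (∀ i, if s i then PosArc f (v i) (v (i + 1)) else NegArc f (v i) (v (i + 1))) ∧
      Odd ((Finset.univ.filter fun i => s i = false).card)

lemma extract (f : (Fin n → Bool) → Fin n → Bool) :
    ∀ k v s, IsWalk f v s k → v k = v 0 → Odd (cnt s k) → NegCyc f := by
  intro k
  induction k using Nat.strong_induction_on with
  | _ k ih =>
  intro v s hw hc hodd
  match k, hw, hc, hodd with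
  | 0, _, _, hodd => exact absurd hodd (by simp [cnt])
  | (K+1), hw, hc, hodd =>
  by_cases hinj : Function.Injective (fun i : Fin (K+1) => v i.val)
  · refine ⟨K, fun i => v i.val, fun i => s i.val, hinj, ?_, ?_⟩
    · intro i
      have hi := hw i.val i.isLt
      rcases Nat.lt_or_ge i.val K with hlt | hge
      · have hne : i ≠ Fin.last K := by
          intro h; rw [h] at hlt; exact absurd hlt (by simp)
        have h1 : ((i + 1 : Fin (K+1)) : ℕ) = i.val + 1 := by
          rw [Fin.val_add_one, if_neg hne]
        simpa only [h1] using hi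
      · have hik : i.val = K := Nat.le_antisymm (Nat.lt_succ_iff.mp i.isLt) hge
        have hlast : i = Fin.last K := Fin.ext hik
        have : ((i + 1 : Fin (K+1)) : ℕ) = 0 := by
          rw [Fin.val_add_one, if_pos hlast]
        simp only [this, hik, hc.symm]
        simpa only [hik] using hi
    · have : ((Finset.univ : Finset (Fin (K+1))).filter fun i => s i.val = false).card
          = ((Finset.range (K+1)).filter fun i => s i = false).card := by
        rw [Finset.card_filter, Finset.card_filter]
        exact Fin.sum_univ_eq_sum_range (fun i => if s i = false then 1 else 0) (K+1)
      rw [this, ← cnt_eq_card]; exact hodd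
  · -- repeated vertex
    rw [Function.not_injective_iff] at hinj
    obtain ⟨i, j, hvij, hij⟩ := hinj
    -- wlog i < j
    obtain ⟨a, b, hab, hbk, hvab⟩ : ∃ a b : ℕ, a < b ∧ b < K + 1 ∧ v a = v b := by
      rcases Nat.lt_or_ge i.val j.val with h | h
      · exact ⟨i.val, j.val, h, j.isLt, hvij⟩
      · have hlt : j.val < i.val := Nat.lt_of_le_of_ne h (fun hh => hij (Fin.ext hh.symm))
        exact ⟨j.val, i.val, hlt, i.isLt, hvij.symm⟩
    obtain ⟨d, hd1, hadb⟩ : ∃ d, 1 ≤ d ∧ a + d = b := ⟨b - a, by omega, by omega⟩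
    obtain ⟨e, he1, hade⟩ : ∃ e, 1 ≤ e ∧ a + d + e = K + 1 := ⟨K + 1 - b, by omega, by omega⟩
    -- inner walk of length d, outer walk of length a + e
    have hw2 : IsWalk f (fun i => v (a + i)) (fun i => s (a + i)) d := by
      intro i hi
      have := hw (a + i) (by omega)
      simpa [Nat.add_assoc] using this
    have hc2 : v (a + d) = v (a + 0) := by
      rw [hadb]; simpa using hvab.symm
    set v3 : ℕ → Fin n := fun i => if i < a then v i else v (i + d) with hv3
    set s3 : ℕ → Bool := fun i => if i < a then s i else s (i + d) with hs3
    have hw3 : IsWalk f v3 s3 (a + e) := by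
      intro i hi
      by_cases hia : i < a
      · have harc := hw i (by omega)
        have e1 : v3 i = v i := by simp [hv3, hia]
        have e2 : v3 (i + 1) = v (i + 1) := by
          by_cases h2 : i + 1 < a
          · simp [hv3, h2]
          · have : i + 1 = a := by omega
            simp only [hv3, this, if_neg (lt_irrefl a), hadb]
            rw [← hvab, ← this]
          
        have e3 : s3 i = s i := by simp [hs3, hia]
        rw [e1, e2, e3]; exact harc
      · have harc := hw (i + d) (by omega)
        have e1 : v3 i = v (i + d) := by simp [hv3, hia]
        have e2 : v3 (i + 1) = v (i + d + 1) := by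
          have : ¬ (i + 1 < a) := by omega
          simp only [hv3, if_neg this]
          congr 1; omega
        have e3 : s3 i = s (i + d) := by simp [hs3, hia]
        rw [e1, e2, e3]; exact harc
    have hc3 : v3 (a + e) = v3 0 := by
      have h1 : v3 (a + e) = v 0 := by
        have : ¬ (a + e < a) := by omega
        simp only [hv3, if_neg this]
        rw [show a + e + d = K + 1 by omega]; exact hc
      rw [h1]
      by_cases h0 : 0 < a
      · simp [hv3, h0]
      · have ha0 : a = 0 := by omega
        simp only [hv3, if_neg (by omega : ¬ (0 < a)), Nat.zero_add]
        rw [show d = b by omega, ← hvab, ha0]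
    -- parity bookkeeping
    have hsum : cnt s (K + 1) = cnt (fun i => s (a + i)) d + cnt s3 (a + e) := by
      have h1 : cnt s (K + 1) = cnt s a + cnt (fun i => s (a + i)) (d + e) := by
        rw [← cnt_split]; congr 1; omega
      have h2 : cnt (fun i => s (a + i)) (d + e)
          = cnt (fun i => s (a + i)) d + cnt (fun i => s (a + (d + i))) e := by
        exact cnt_split _ d e
      have h3 : cnt s3 (a + e) = cnt s3 a + cnt (fun i => s3 (a + i)) e := cnt_split _ a e
      have h4 : cnt s3 a = cnt s a := by
        apply cnt_congr; intro i hi; simp [hs3, hi]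
      have h5 : cnt (fun i => s3 (a + i)) e = cnt (fun i => s (a + (d + i))) e := by
        apply cnt_congr; intro i hi
        have : ¬ (a + i < a) := by omega
        simp only [hs3, if_neg this]
        congr 1; omega
      rw [h1, h2, h3, h4, h5]; ring
    rcases Nat.even_or_odd (cnt (fun i => s (a + i)) d) with hev | hod
    · have hodd3 : Odd (cnt s3 (a + e)) := by
        rw [hsum] at hodd
        rcases hev with ⟨m, hm⟩; rcases hodd with ⟨m2, hm2⟩
        exact ⟨m2 - m, by omega⟩
      exact ih (a + e) (by omega) v3 s3 hw3 hc3 hodd3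
    · exact ih d (by omega) _ _ hw2 (by simpa using hc2) hod

lemma not_arc_eq {f : (Fin n → Bool) → Fin n → Bool} {j i : Fin n} (h : ¬ Arc f j i)
    (x : Fin n → Bool) (b : Bool) : f (Function.update x j b) i = f x i := by
  have key : ∀ y : Fin n → Bool, f (Function.update y j true) i = f (Function.update y j false) i := by
    intro y
    cases ht : f (Function.update y j true) i <;> cases hf : f (Function.update y j false) i
    · rfl
    · exact absurd (Or.inr ⟨y, ht, hf⟩) h
    · exact absurd (Or.inl ⟨y, ht, hf⟩) h
    · rfl
  conv_rhs => rw [← Function.update_eq_self j x]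
  cases b <;> cases hxj : x j
  · rfl
  · exact (key x).symm
  · exact key x
  · rfl

lemma indep_agree (f : (Fin n → Bool) → Fin n → Bool) (i : Fin n) :
    ∀ (m : ℕ) (x y : Fin n → Bool), (Finset.univ.filter fun j => x j ≠ y j).card ≤ m →
      (∀ j, x j ≠ y j → ¬ Arc f j i) → f x i = f y i := by
  intro m
  induction m with
  | zero =>
      intro x y hc _
      have hx : x = y := by
        funext j
        by_contra hj
        have : j ∈ Finset.univ.filter fun j => x j ≠ y j := by simp [hj]
        have := Finset.card_pos.mpr ⟨j, this⟩
        omega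
      rw [hx]
  | succ m ih =>
      intro x y hc h
      by_cases hxy : x = y
      · rw [hxy]
      · obtain ⟨j, hj⟩ : ∃ j, x j ≠ y j := by
          by_contra hno
          push_neg at hno
          exact hxy (funext fun j => hno j)
        set x' := Function.update x j (y j) with hx'
        have e1 : f x' i = f x i := not_arc_eq (h j hj) x (y j)
        have hsub : (Finset.univ.filter fun j' => x' j' ≠ y j')
            ⊆ (Finset.univ.filter fun j' => x j' ≠ y j').erase j := by
          intro j' hj'
          simp only [Finset.mem_filter, Finset.mem_univ, true_and] at hj'
          have hne : j' ≠ j := by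
            intro hh; rw [hh] at hj'; simp [hx'] at hj'
          refine Finset.mem_erase.mpr ⟨hne, ?_⟩
          simp only [Finset.mem_filter, Finset.mem_univ, true_and]
          rwa [hx', Function.update_of_ne hne] at hj'
        have hcard : (Finset.univ.filter fun j' => x' j' ≠ y j').card ≤ m := by
          have h1 := Finset.card_le_card hsub
          have h2 : j ∈ Finset.univ.filter fun j' => x j' ≠ y j' := by simp [hj]
          have h3 := Finset.card_erase_of_mem h2
          omega
        have h' : ∀ j', x' j' ≠ y j' → ¬ Arc f j' i := by
          intro j' hj'
          apply h
          have hne : j' ≠ j := by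
            intro hh; rw [hh] at hj'; simp [hx'] at hj'
          rwa [hx', Function.update_of_ne hne] at hj'
        rw [← e1]
        exact ih x' y hcard h'

lemma agree_of_no_arc {f : (Fin n → Bool) → Fin n → Bool} {i : Fin n} {x y : Fin n → Bool}
    (h : ∀ j, x j ≠ y j → ¬ Arc f j i) : f x i = f y i :=
  indep_agree f i _ x y le_rfl h

lemma mono_step (g : (Fin n → Bool) → Bool)
    (h : ∀ x j, g (Function.update x j false) = true → g (Function.update x j true) = true) :
    ∀ (m : ℕ) (u v : Fin n → Bool), (Finset.univ.filter fun j => u j ≠ v j).card ≤ m →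
      u ≤ v → g u = true → g v = true := by
  intro m
  induction m with
  | zero =>
      intro u v hc _ hg
      have : u = v := by
        funext j
        by_contra hj
        have : j ∈ Finset.univ.filter fun j => u j ≠ v j := by simp [hj]
        have := Finset.card_pos.mpr ⟨j, this⟩
        omega
      rwa [← this]
  | succ m ih =>
      intro u v hc hle hg
      by_cases huv : u = v
      · rwa [← huv]
      · obtain ⟨j, hj⟩ : ∃ j, u j ≠ v j := by
          by_contra hno
          push_neg at hno
          exact huv (funext fun j => hno j)
        have huj : u j = false := by
          have := hle j
          cases h1 : u j <;> cases h2 : v j <;> simp_all [Bool.le_iff_imp]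
        have hvj : v j = true := by
          have := hle j
          cases h1 : u j <;> cases h2 : v j <;> simp_all [Bool.le_iff_imp]
        set u' := Function.update u j true with hu'
        have hg' : g u' = true := by
          apply h u j
          rw [← huj, Function.update_eq_self]
          exact hg
        have hle' : u' ≤ v := by
          intro j'
          by_cases hh : j' = j
          · subst hh; simp [hu', hvj]
          · rw [hu', Function.update_of_ne hh]; exact hle j'
        have hsub : (Finset.univ.filter fun j' => u' j' ≠ v j')
            ⊆ (Finset.univ.filter fun j' => u j' ≠ v j').erase j := by
          intro j' hj'
          simp only [Finset.mem_filter, Finset.mem_univ, true_and] at hj'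
          have hne : j' ≠ j := by
            intro hh; rw [hh] at hj'; simp [hu', hvj] at hj'
          refine Finset.mem_erase.mpr ⟨hne, ?_⟩
          simp only [Finset.mem_filter, Finset.mem_univ, true_and]
          rwa [hu', Function.update_of_ne hne] at hj'
        have hcard : (Finset.univ.filter fun j' => u' j' ≠ v j').card ≤ m := by
          have h1 := Finset.card_le_card hsub
          have h2 : j ∈ Finset.univ.filter fun j' => u j' ≠ v j' := by simp [hj]
          have h3 := Finset.card_erase_of_mem h2
          omega
        exact ih u' v hcard hle' hg'

lemma monotone_of_coord (g : (Fin n → Bool) → Bool)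
    (h : ∀ x j, g (Function.update x j false) = true → g (Function.update x j true) = true) :
    ∀ u v : Fin n → Bool, u ≤ v → g u ≤ g v := by
  intro u v hle
  cases hg : g u
  · exact Bool.false_le _
  · rw [mono_step g h _ u v le_rfl hle hg]

lemma single_walk {f : (Fin n → Bool) → Fin n → Bool} {b c : Fin n} (h : Arc f b c) :
    ∃ v s, v 0 = b ∧ v 1 = c ∧ IsWalk f v s 1 ∧
      ((PosArc f b c → cnt s 1 = 0) ∨ (NegArc f b c ∧ cnt s 1 = 1)) := by
  rcases h with hp | hn
  · refine ⟨fun i => if i = 0 then b else c, fun _ => true, by simp, by simp, ?_, Or.inl (fun _ => rfl)⟩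
    intro i hi
    have : i = 0 := by omega
    subst this
    simpa using hp
  · refine ⟨fun i => if i = 0 then b else c, fun _ => false, by simp, by simp, ?_, Or.inr ⟨hn, rfl⟩⟩
    intro i hi
    have : i = 0 := by omega
    subst this
    simpa using hn

lemma pos_walk {f : (Fin n → Bool) → Fin n → Bool} {b c : Fin n} (h : PosArc f b c) :
    ∃ v s, v 0 = b ∧ v 1 = c ∧ IsWalk f v s 1 ∧ cnt s 1 = 0 := by
  refine ⟨fun i => if i = 0 then b else c, fun _ => true, by simp, by simp, ?_, rfl⟩
  intro i hi
  have : i = 0 := by omega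
  subst this
  simpa using h

lemma neg_walk {f : (Fin n → Bool) → Fin n → Bool} {b c : Fin n} (h : NegArc f b c) :
    ∃ v s, v 0 = b ∧ v 1 = c ∧ IsWalk f v s 1 ∧ cnt s 1 = 1 := by
  refine ⟨fun i => if i = 0 then b else c, fun _ => false, by simp, by simp, ?_, rfl⟩
  intro i hi
  have : i = 0 := by omega
  subst this
  simpa using h

lemma walk_append {f : (Fin n → Bool) → Fin n → Bool} {v1 s1 v2 s2 : _} {k m : ℕ}
    (h1 : IsWalk f v1 s1 k) (h2 : IsWalk f v2 s2 m) (hjoin : v1 k = v2 0) :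
    ∃ v s, v 0 = v1 0 ∧ v (k + m) = v2 m ∧ IsWalk f v s (k + m) ∧
      cnt s (k + m) = cnt s1 k + cnt s2 m := by
  set v : ℕ → Fin n := fun i => if i < k then v1 i else v2 (i - k) with hv
  set s : ℕ → Bool := fun i => if i < k then s1 i else s2 (i - k) with hs
  refine ⟨v, s, ?_, ?_, ?_, ?_⟩
  · by_cases h0 : 0 < k
    · simp [hv, h0]
    · have hk0 : k = 0 := by omega
      simp [hv, hk0, ← hjoin, hk0]
  · have : ¬ (k + m < k) := by omega
    simp only [hv, if_neg this]
    congr 1; omega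
  · intro i hi
    by_cases hik : i < k
    · have e1 : v i = v1 i := by simp [hv, hik]
      have e3 : s i = s1 i := by simp [hs, hik]
      by_cases hik1 : i + 1 < k
      · have e2 : v (i + 1) = v1 (i + 1) := by simp [hv, hik1]
        rw [e1, e2, e3]; exact h1 i hik
      · have hk : i + 1 = k := by omega
        have e2 : v (i + 1) = v1 (i + 1) := by
          simp only [hv, if_neg (by omega : ¬ (i+1 < k))]
          rw [hk]; simpa using hjoin.symm
        rw [e1, e2, e3]; exact h1 i hik
    · have e1 : v i = v2 (i - k) := by simp [hv, hik]
      have e2 : v (i + 1) = v2 ((i - k) + 1) := by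
        simp only [hv, if_neg (by omega : ¬ (i+1 < k))]
        congr 1; omega
      have e3 : s i = s2 (i - k) := by simp [hs, hik]
      rw [e1, e2, e3]; exact h2 (i - k) (by omega)
  · have h1' : cnt s (k + m) = cnt s k + cnt (fun i => s (k + i)) m := cnt_split _ _ _
    have h2' : cnt s k = cnt s1 k := by
      apply cnt_congr; intro i hi; simp [hs, hi]
    have h3' : cnt (fun i => s (k + i)) m = cnt s2 m := by
      apply cnt_congr; intro i hi
      simp only [hs, if_neg (by omega : ¬ (k + i < k))]
      congr 1; omega
    rw [h1', h2', h3']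

lemma transgen_walk {f : (Fin n → Bool) → Fin n → Bool} {R : Fin n → Fin n → Prop}
    (hR : ∀ a b, R a b → Arc f a b) {b c : Fin n} (h : Relation.TransGen R b c) :
    ∃ k v s, v 0 = b ∧ v k = c ∧ IsWalk f v s k := by
  induction h with
  | single hbc =>
      obtain ⟨v, s, h0, h1, hw, _⟩ := single_walk (hR _ _ hbc)
      exact ⟨1, v, s, h0, h1, hw⟩
  | tail _ hcd ih =>
      obtain ⟨k, v, s, h0, h1, hw⟩ := ih
      obtain ⟨v2, s2, g0, g1, gw, _⟩ := single_walk (hR _ _ hcd)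
      obtain ⟨v3, s3, e0, e1, ew, _⟩ := walk_append hw gw (by rw [h1, g0])
      exact ⟨k + 1, v3, s3, by rw [e0, h0], by rw [e1, g1], ew⟩

lemma const_all (f : (Fin n → Bool) → Fin n → Bool)
    (h : ∀ i, ∃ b, ∀ x, f x i = b) : ∃ y, f y = y := by
  classical
  refine ⟨fun i => Classical.choose (h i), funext fun i => ?_⟩
  exact Classical.choose_spec (h i) _

lemma main : ∀ (m : ℕ) (f : (Fin n → Bool) → Fin n → Bool), ¬ NegCyc f →
    ∀ (A : Finset (Fin n)), A.card ≤ m →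
      (∀ i, i ∉ A → ∃ b, ∀ x, f x i = b) → ∃ y, f y = y := by
  classical
  intro m
  induction m with
  | zero =>
      intro f _ A hcard hconst
      have hA : A = ∅ := Finset.card_eq_zero.mp (Nat.le_zero.mp hcard)
      exact const_all f fun i => hconst i (by simp [hA])
  | succ m ih =>
      intro f hNC A hcard hconst
      rcases Finset.eq_empty_or_nonempty A with hA | hAne
      · exact const_all f fun i => hconst i (by simp [hA])
      -- no odd closed walk
      have hNCw : ∀ k v s, IsWalk f v s k → v k = v 0 → ¬ Odd (cnt s k) :=
        fun k v s hw hc hodd => hNC (extract f k v s hw hc hodd)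
      -- source strongly connected component
      set R' : Fin n → Fin n → Prop := fun j i => j ∈ A ∧ i ∈ A ∧ Arc f j i with hR'
      set Anc : Fin n → Finset (Fin n) :=
        fun b => A.filter (fun j => j = b ∨ Relation.TransGen R' j b) with hAnc
      obtain ⟨a, haA, hamin⟩ := A.exists_min_image (fun b => (Anc b).card) hAne
      set S : Finset (Fin n) := Anc a with hS
      have haS : a ∈ S := by simp [hS, hAnc, haA]
      have hSA : S ⊆ A := Finset.filter_subset _ _
      have hSleft : ∀ j i, i ∈ S → j ∈ A → Arc f j i → j ∈ S := by
        intro j i hiS hjA harc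
        have hiA : i ∈ A := hSA hiS
        have h1 : Relation.TransGen R' j i := Relation.TransGen.single ⟨hjA, hiA, harc⟩
        simp only [hS, hAnc, Finset.mem_filter] at hiS ⊢
        refine ⟨hjA, Or.inr ?_⟩
        rcases hiS.2 with h2 | h2
        · rwa [h2] at h1
        · exact h1.trans h2
      have hreachS : ∀ b ∈ S, (a = b ∨ Relation.TransGen R' a b) ∧
          (b = a ∨ Relation.TransGen R' b a) := by
        intro b hb
        have hb2 := hb
        simp only [hS, hAnc, Finset.mem_filter] at hb2
        refine ⟨?_, hb2.2⟩
        have hsub : Anc b ⊆ Anc a := by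
          intro j hj
          simp only [hAnc, Finset.mem_filter] at hj ⊢
          refine ⟨hj.1, ?_⟩
          rcases hj.2 with h1 | h1
          · rw [h1]; exact hb2.2
          · rcases hb2.2 with h2 | h2
            · exact Or.inr (h2 ▸ h1)
            · exact Or.inr (h1.trans h2)
        have heq : Anc b = Anc a :=
          Finset.eq_of_subset_of_card_le hsub (hamin b (hSA hb))
        have : a ∈ Anc b := by rw [heq]; exact haS
        simp only [hAnc, Finset.mem_filter] at this
        exact this.2
      have hRarc : ∀ x y, R' x y → Arc f x y := fun x y h => h.2.2
      have hwalkTo : ∀ b ∈ S, ∃ k v s, v 0 = a ∧ v k = b ∧ IsWalk f v s k := by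
        intro b hb
        rcases (hreachS b hb).1 with h | h
        · exact ⟨0, fun _ => a, fun _ => true, rfl, h, fun i hi => absurd hi (by omega)⟩
        · exact transgen_walk hRarc h
      have hwalkFrom : ∀ b ∈ S, ∃ k v s, v 0 = b ∧ v k = a ∧ IsWalk f v s k := by
        intro b hb
        rcases (hreachS b hb).2 with h | h
        · exact ⟨0, fun _ => b, fun _ => true, rfl, h ▸ rfl, fun i hi => absurd hi (by omega)⟩
        · exact transgen_walk hRarc h
      -- parity uniqueness of walks from a
      have hpar : ∀ b ∈ S, ∀ k1 v1 s1 k2 v2 s2,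
          v1 0 = a → v1 k1 = b → IsWalk f v1 s1 k1 →
          v2 0 = a → v2 k2 = b → IsWalk f v2 s2 k2 →
          (Odd (cnt s1 k1) ↔ Odd (cnt s2 k2)) := by
        intro b hb k1 v1 s1 k2 v2 s2 h10 h11 h1w h20 h21 h2w
        obtain ⟨k3, v3, s3, h30, h31, h3w⟩ := hwalkFrom b hb
        obtain ⟨w1, t1, e10, e11, e1w, e1c⟩ := walk_append h1w h3w (by rw [h11, h30])
        obtain ⟨w2, t2, e20, e21, e2w, e2c⟩ := walk_append h2w h3w (by rw [h21, h30])
        have c1 : ¬ Odd (cnt t1 (k1 + k3)) :=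
          hNCw _ _ _ e1w (by rw [e11, e10, h31, h10])
        have c2 : ¬ Odd (cnt t2 (k2 + k3)) :=
          hNCw _ _ _ e2w (by rw [e21, e20, h31, h20])
        rw [e1c, Nat.odd_iff] at c1
        rw [e2c, Nat.odd_iff] at c2
        rw [Nat.odd_iff, Nat.odd_iff]
        omega
      -- the 2-coloring of S
      set σ : Fin n → Bool := fun b =>
        if ∃ k v s, v 0 = a ∧ v k = b ∧ IsWalk f v s k ∧ Odd (cnt s k) then true else false
        with hσdef
      have hσ : ∀ b ∈ S, ∀ k v s, v 0 = a → v k = b → IsWalk f v s k →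
          (σ b = true ↔ Odd (cnt s k)) := by
        intro b hb k v s h0 h1 hw
        simp only [hσdef]
        split
        · next hex =>
            obtain ⟨k2, v2, s2, g0, g1, gw, godd⟩ := hex
            exact ⟨fun _ => (hpar b hb k v s k2 v2 s2 h0 h1 hw g0 g1 gw).mpr godd,
              fun _ => rfl⟩
        · next hex =>
            exact ⟨fun h => absurd h Bool.false_ne_true,
              fun hodd => (hex ⟨k, v, s, h0, h1, hw, hodd⟩).elim⟩
      have hconsPos : ∀ j i, j ∈ S → i ∈ S → PosArc f j i → σ i = σ j := by
        intro j i hj hi hp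
        obtain ⟨k, v, s, h0, h1, hw⟩ := hwalkTo j hj
        obtain ⟨v2, s2, g0, g1, gw, gc⟩ := pos_walk hp
        obtain ⟨w, t, e0, e1, ew, ec⟩ := walk_append hw gw (by rw [h1, g0])
        have h2 := hσ i hi (k + 1) w t (by rw [e0, h0]) (by rw [e1, g1]) ew
        have h3 := hσ j hj k v s h0 h1 hw
        rw [ec, gc, Nat.add_zero] at h2
        exact Bool.coe_iff_coe.mp (h2.trans h3.symm)
      have hconsNeg : ∀ j i, j ∈ S → i ∈ S → NegArc f j i → σ i = !(σ j) := by
        intro j i hj hi hp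
        obtain ⟨k, v, s, h0, h1, hw⟩ := hwalkTo j hj
        obtain ⟨v2, s2, g0, g1, gw, gc⟩ := neg_walk hp
        obtain ⟨w, t, e0, e1, ew, ec⟩ := walk_append hw gw (by rw [h1, g0])
        have h2 := hσ i hi (k + 1) w t (by rw [e0, h0]) (by rw [e1, g1]) ew
        have h3 := hσ j hj k v s h0 h1 hw
        rw [ec, gc, Nat.odd_add_one] at h2
        have h4 : σ i = true ↔ ¬ (σ j = true) := by
          rw [h2, h3, Nat.not_odd_iff_even]
        have h5 : σ i = true ↔ (!(σ j)) = true := by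
          rw [h4, Bool.not_eq_true', ← Bool.not_eq_true]
        exact Bool.coe_iff_coe.mp h5
      have hnN : ∀ j i, j ∈ S → i ∈ S → σ i = σ j → ¬ NegArc f j i := by
        intro j i hj hi hss hneg
        have := hconsNeg j i hj hi hneg
        rw [hss] at this
        exact Bool.not_ne_self _ this.symm
      have hnP : ∀ j i, j ∈ S → i ∈ S → σ i ≠ σ j → ¬ PosArc f j i := by
        intro j i hj hi hss hpos
        exact hss (hconsPos j i hj hi hpos)
      -- default values outside A
      set c0 : Fin n → Bool := fun j => if hj : j ∉ A then Classical.choose (hconst j hj) else false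
        with hc0def
      have hc0 : ∀ j, j ∉ A → ∀ x, f x j = c0 j := by
        intro j hj x
        simp only [hc0def, dif_pos hj]
        exact Classical.choose_spec (hconst j hj) x
      -- the twisted embedding and monotone map on the S-cube
      set e : (Fin n → Bool) → (Fin n → Bool) :=
        fun u j => if j ∈ S then xor (u j) (σ j) else c0 j with hedef
      set Φ : (Fin n → Bool) → (Fin n → Bool) :=
        fun u i => if i ∈ S then xor (f (e u) i) (σ i) else u i with hΦdef
      have he_upd_mem : ∀ u (j : Fin n) (b : Bool), j ∈ S →
          e (Function.update u j b) = Function.update (e u) j (xor b (σ j)) := by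
        intro u j b hj
        funext j'
        by_cases hjj : j' = j
        · subst hjj
          simp [hedef, hj]
        · simp [hedef, Function.update_of_ne hjj]
      have he_upd_nmem : ∀ u (j : Fin n) (b : Bool), j ∉ S →
          e (Function.update u j b) = e u := by
        intro u j b hj
        funext j'
        by_cases hjj : j' = j
        · subst hjj; simp [hedef, hj]
        · simp [hedef, Function.update_of_ne hjj]
      have hΦmono : Monotone Φ := by
        intro u v huv
        intro i
        refine monotone_of_coord (fun u => Φ u i) ?_ u v huv
        intro x j hyp
        by_cases hiS : i ∈ S
        · by_cases hjS : j ∈ S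
          · rw [hΦdef] at hyp ⊢
            simp only [if_pos hiS] at hyp ⊢
            rw [he_upd_mem x j false hjS] at hyp
            rw [he_upd_mem x j true hjS]
            cases hsj : σ j <;> cases hsi : σ i <;>
              simp only [hsj, hsi, Bool.xor_false, Bool.xor_true, Bool.false_xor, Bool.true_xor,
                Bool.not_false, Bool.not_true, Bool.not_eq_true'] at hyp ⊢
            · -- σ j = false, σ i = false : f(upd false)=true → f(upd true)=true, no NegArc
              by_contra hcon
              rw [Bool.not_eq_true] at hcon
              exact hnN j i hjS hiS (by rw [hsi, hsj]) ⟨e x, hcon, hyp⟩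
            · -- σ j = false, σ i = true : f(upd false)=false → f(upd true)=false, no PosArc
              by_contra hcon
              rw [Bool.not_eq_false] at hcon
              exact hnP j i hjS hiS (by rw [hsi, hsj]; decide) ⟨e x, hcon, hyp⟩
            · -- σ j = true, σ i = false : f(upd true)=true → f(upd false)=true, no PosArc
              by_contra hcon
              rw [Bool.not_eq_true] at hcon
              exact hnP j i hjS hiS (by rw [hsi, hsj]; decide) ⟨e x, hyp, hcon⟩
            · -- σ j = true, σ i = true : f(upd true)=false → f(upd false)=false, no NegArc
              by_contra hcon
              rw [Bool.not_eq_false] at hcon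
              exact hnN j i hjS hiS (by rw [hsi, hsj]) ⟨e x, hyp, hcon⟩
          · rw [hΦdef] at hyp ⊢
            simp only [if_pos hiS] at hyp ⊢
            rw [he_upd_nmem x j false hjS] at hyp
            rwa [he_upd_nmem x j true hjS]
        · rw [hΦdef] at hyp ⊢
          simp only [if_neg hiS] at hyp ⊢
          by_cases hij : i = j
          · subst hij
            simp at hyp
          · rwa [Function.update_of_ne hij] at hyp ⊢
      -- Tarski fixed point
      obtain ⟨u, hu⟩ : ∃ u, Φ u = u := ⟨_, OrderHom.map_lfp ⟨Φ, hΦmono⟩⟩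
      have hufix : ∀ i, i ∈ S → f (e u) i = e u i := by
        intro i hiS
        have h1 : Φ u i = u i := by rw [hu]
        rw [hΦdef] at h1
        simp only [if_pos hiS] at h1
        have h2 : e u i = xor (u i) (σ i) := by simp [hedef, hiS]
        rw [h2, ← h1]
        cases f (e u) i <;> cases σ i <;> rfl
      -- the reduced network
      set ov : (Fin n → Bool) → (Fin n → Bool) :=
        fun x j => if j ∈ S then e u j else x j with hovdef
      set g : (Fin n → Bool) → Fin n → Bool :=
        fun x i => if i ∈ S then e u i else f (ov x) i with hgdef
      have hov_upd_mem : ∀ x (j : Fin n) (b : Bool), j ∈ S →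
          ov (Function.update x j b) = ov x := by
        intro x j b hj
        funext j'
        by_cases hjj : j' = j
        · subst hjj; simp [hovdef, hj]
        · simp [hovdef, Function.update_of_ne hjj]
      have hov_upd_nmem : ∀ x (j : Fin n) (b : Bool), j ∉ S →
          ov (Function.update x j b) = Function.update (ov x) j b := by
        intro x j b hj
        funext j'
        by_cases hjj : j' = j
        · subst hjj; simp [hovdef, hj]
        · simp [hovdef, Function.update_of_ne hjj]
      have hgPos : ∀ j i, PosArc g j i → PosArc f j i := by
        intro j i ⟨x, ht, hf⟩
        by_cases hiS : i ∈ S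
        · rw [hgdef] at ht hf
          simp only [if_pos hiS] at ht hf
          rw [ht] at hf
          exact absurd hf (by decide : ¬ (true = false))
        · rw [hgdef] at ht hf
          simp only [if_neg hiS] at ht hf
          by_cases hjS : j ∈ S
          · rw [hov_upd_mem x j true hjS] at ht
            rw [hov_upd_mem x j false hjS] at hf
            rw [ht] at hf
            exact absurd hf (by decide : ¬ (true = false))
          · rw [hov_upd_nmem x j true hjS] at ht
            rw [hov_upd_nmem x j false hjS] at hf
            exact ⟨ov x, ht, hf⟩
      have hgNeg : ∀ j i, NegArc g j i → NegArc f j i := by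
        intro j i ⟨x, ht, hf⟩
        by_cases hiS : i ∈ S
        · rw [hgdef] at ht hf
          simp only [if_pos hiS] at ht hf
          rw [ht] at hf
          exact absurd hf.symm (by decide : ¬ (true = false))
        · rw [hgdef] at ht hf
          simp only [if_neg hiS] at ht hf
          by_cases hjS : j ∈ S
          · rw [hov_upd_mem x j true hjS] at ht
            rw [hov_upd_mem x j false hjS] at hf
            rw [ht] at hf
            exact absurd hf.symm (by decide : ¬ (true = false))
          · rw [hov_upd_nmem x j true hjS] at ht
            rw [hov_upd_nmem x j false hjS] at hf
            exact ⟨ov x, ht, hf⟩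
      have hNCg : ¬ NegCyc g := by
        rintro ⟨k, v, s, hinj, harcs, hodd⟩
        refine hNC ⟨k, v, s, hinj, ?_, hodd⟩
        intro i
        have h1 := harcs i
        by_cases hsi : s i = true
        · rw [if_pos hsi] at h1 ⊢
          exact hgPos _ _ h1
        · rw [if_neg hsi] at h1 ⊢
          exact hgNeg _ _ h1
      -- the reduced constant set
      have hA'const : ∀ i, i ∉ A \ S → ∃ b, ∀ x, g x i = b := by
        intro i hi
        rw [Finset.mem_sdiff] at hi
        push_neg at hi
        by_cases hiS : i ∈ S
        · exact ⟨e u i, fun x => by simp [hgdef, hiS]⟩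
        · have hiA : i ∉ A := fun h => hiS (hi h)
          exact ⟨c0 i, fun x => by
            simp only [hgdef, if_neg hiS]
            exact hc0 i hiA (ov x)⟩
      have hcard' : (A \ S).card ≤ m := by
        have h1 : (A \ S).card = A.card - S.card := Finset.card_sdiff_of_subset hSA
        have h2 : 1 ≤ S.card := Finset.card_pos.mpr ⟨a, haS⟩
        omega
      obtain ⟨y, hy⟩ := ih g hNCg (A \ S) hcard' hA'const
      -- assemble the fixed point of f
      refine ⟨ov y, funext fun i => ?_⟩
      by_cases hiS : i ∈ S
      · have h1 : f (ov y) i = f (e u) i := by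
          apply agree_of_no_arc
          intro j hj
          have hjS : j ∉ S := by
            intro hjS
            apply hj
            simp [hovdef, hedef, hjS]
          have hovj : ov y j = y j := by simp [hovdef, hjS]
          have heuj : e u j = c0 j := by simp [hedef, hjS]
          rw [hovj, heuj] at hj
          have hjA : j ∈ A := by
            by_contra hjA
            apply hj
            have : y j = g y j := by rw [hy]
            rw [this]
            simp only [hgdef, if_neg hjS]
            exact hc0 j hjA (ov y)
          intro harc
          exact hjS (hSleft j i hiS hjA harc)
        rw [h1, hufix i hiS]
        simp [hovdef, hiS]
      · have h1 : f (ov y) i = g y i := by simp [hgdef, hiS]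
        rw [h1, hy]
        simp [hovdef, hiS]

end SB19


theorem stmt_19 {n : ℕ} (f : (Fin n → Bool) → Fin n → Bool)
    (hG : ¬ ∃ (k : ℕ) (v : Fin (k + 1) → Fin n) (s : Fin (k + 1) → Bool),
      Function.Injective v ∧
      (∀ i, if s i then PosArc f (v i) (v (i + 1)) else NegArc f (v i) (v (i + 1))) ∧
      Odd ((Finset.univ.filter fun i => s i = false).card)) :
    ∃ y, f y = y := by
  classical
  exact SB19.main (Finset.univ : Finset (Fin n)).card f hG Finset.univ le_rfl
    (fun i hi => absurd (Finset.mem_univ i) hi)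
end
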